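/- arXiv:2509.08526 — 10 statements merged into one kernel-verified Lean document; each statement's English description precedes it below -/
import Mathlib

section
/- Let C₀ be an [n, k+1, d] MDS code over 𝔽_q and let C ⊆ C₀ be any k-dimensional linear subcode. Then the covering radius of C equals n − k. -/
open Module

-- coordinate projections span the dual of a finite product
lemma proj_span (F : Type*) [Field F] (n : ℕ) :
    Submodule.span F (Set.range fun i : Fin n => (LinearMap.proj i : (Fin n → F) →ₗ[F] F)) = ⊤ := by
  rw [eq_top_iff]
  intro f _
  have : f = ∑ i : Fin n, f ((Pi.single i 1 : Fin n → F)) • (LinearMap.proj i : (Fin n → F) →ₗ[F] F) := by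
    apply LinearMap.ext; intro x
    have hx : x = ∑ i : Fin n, x i • (Pi.single i 1 : Fin n → F) := by
      ext j
      simp [Finset.sum_apply, Pi.single_apply]
    conv_lhs => rw [hx]
    simp [map_sum, mul_comm]
  rw [this]
  exact Submodule.sum_mem _ fun i _ =>
    Submodule.smul_mem _ _ (Submodule.subset_span ⟨i, rfl⟩)

lemma key {F : Type*} [Field F] {n : ℕ} (C : Submodule F (Fin n → F)) :
    ∃ S : Finset (Fin n), S.card = finrank F C ∧
      ∀ u : Fin n → F, ∃ c ∈ C, ∀ i ∈ S, (c : Fin n → F) i = u i := by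
  classical
  haveI : FiniteDimensional F C := inferInstance
  set φ : Fin n → Module.Dual F C := fun i => (LinearMap.proj i).comp C.subtype with hφ
  have hsurj : Function.Surjective C.subtype.dualMap :=
    LinearMap.dualMap_surjective_of_injective C.injective_subtype
  have hrange : Set.range φ = C.subtype.dualMap '' Set.range (fun i : Fin n => (LinearMap.proj i : (Fin n → F) →ₗ[F] F)) := by
    rw [← Set.range_comp]; rfl
  have hspan : Submodule.span F (Set.range φ) = ⊤ := by
    rw [hrange, ← Submodule.map_span, proj_span, Submodule.map_top,
      LinearMap.range_eq_top.mpr hsurj]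
  obtain ⟨b, hbsub, hbspan, hbli⟩ := exists_linearIndependent F (Set.range φ)
  rw [hspan] at hbspan
  have hfinb : b.Finite := hbli.setFinite
  -- a basis of the dual
  let B : Basis b F (Module.Dual F C) := Basis.mk hbli (by rw [Subtype.range_coe]; exact hbspan.ge)
  haveI : Fintype b := hfinb.fintype
  have hcardb : Fintype.card b = finrank F C := by
    rw [← Subspace.dual_finrank_eq, finrank_eq_card_basis B]
  -- choose indices
  have hchoice : ∀ f : b, ∃ i : Fin n, φ i = (f : Module.Dual F C) := fun f => hbsub f.2
  choose g hg using hchoice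
  have hginj : Function.Injective g := by
    intro f₁ f₂ h
    have : (f₁ : Module.Dual F C) = f₂ := by rw [← hg f₁, ← hg f₂, h]
    exact Subtype.ext this
  refine ⟨Finset.univ.image g, ?_, ?_⟩
  · rw [Finset.card_image_of_injective _ hginj, Finset.card_univ, hcardb]
  · set S : Finset (Fin n) := Finset.univ.image g
    set ψ : C →ₗ[F] (S → F) := LinearMap.pi (fun i : S => φ i.1) with hψ
    have hinj : Function.Injective ψ := by
      rw [← LinearMap.ker_eq_bot, Submodule.eq_bot_iff]
      intro c hc
      have hb0 : ∀ f ∈ b, f c = 0 := by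
        intro f hf
        have hgS : g ⟨f, hf⟩ ∈ S := Finset.mem_image_of_mem g (Finset.mem_univ _)
        have := congrFun hc ⟨g ⟨f, hf⟩, hgS⟩
        simpa [ψ, hg ⟨f, hf⟩] using this
      have hall : ∀ f : Module.Dual F C, f c = 0 := by
        intro f
        have hf : f ∈ Submodule.span F b := by rw [hbspan]; trivial
        refine Submodule.span_induction (fun x hx => hb0 x hx) (by simp) ?_ ?_ hf
        · intro x y _ _ hx hy; simp [hx, hy]
        · intro a x _ hx; simp [hx]
      exact (Module.forall_dual_apply_eq_zero_iff F c).mp hall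
    have hcard : finrank F C = finrank F (S → F) := by
      rw [finrank_pi, Fintype.card_coe, Finset.card_image_of_injective _ hginj,
        Finset.card_univ, hcardb]
    have hsurjψ : Function.Surjective ψ :=
      (LinearMap.injective_iff_surjective_of_finrank_eq_finrank hcard).mp hinj
    intro u
    obtain ⟨c, hc⟩ := hsurjψ (fun i : S => u i.1)
    refine ⟨c, c.2, fun i hi => ?_⟩
    have := congrFun hc ⟨i, hi⟩
    simpa [ψ, hφ] using this

/-- If `C₀` is an `[n, k+1, d]` MDS code over `𝔽_q` (i.e. `d = n-(k+1)+1`) and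
`C ⊆ C₀` is a `k`-dimensional subcode, then the covering radius of `C` is `n - k`:
every word is within Hamming distance `n-k` of `C`, and some word has distance
at least `n-k` from every codeword of `C`. -/
theorem stmt_0 {F : Type*} [Field F] [Fintype F] [DecidableEq F]
    (n k d : ℕ) (C₀ C : Submodule F (Fin n → F))
    (hsub : C ≤ C₀)
    (hdim₀ : Module.finrank F C₀ = k + 1)
    (hdim : Module.finrank F C = k)
    (hmin : ∀ x ∈ C₀, x ≠ 0 → d ≤ hammingNorm x)
    (hach : ∃ x ∈ C₀, x ≠ 0 ∧ hammingNorm x = d)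
    (hMDS : d = n - (k + 1) + 1) :
    (∀ u : Fin n → F, ∃ c ∈ C, hammingDist u c ≤ n - k) ∧
      (∃ u : Fin n → F, ∀ c ∈ C, n - k ≤ hammingDist u c) := by
  classical
  constructor
  · obtain ⟨S, hScard, hS⟩ := key C
    rw [hdim] at hScard
    intro u
    obtain ⟨c, hcC, hc⟩ := hS u
    refine ⟨c, hcC, ?_⟩
    have hsubset : (Finset.univ.filter fun i => u i ≠ c i) ⊆ Sᶜ := by
      intro i hi
      simp only [Finset.mem_filter, Finset.mem_univ, true_and] at hi
      simp only [Finset.mem_compl]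
      intro hiS
      exact hi (hc i hiS).symm
    calc hammingDist u c ≤ Sᶜ.card := Finset.card_le_card hsubset
      _ = n - k := by rw [Finset.card_compl, hScard, Fintype.card_fin]
  · have hne : C ≠ C₀ := by
      intro h; rw [h, hdim₀] at hdim; omega
    obtain ⟨u, huC₀, huC⟩ := SetLike.exists_of_lt (lt_of_le_of_ne hsub hne)
    refine ⟨u, fun c hcC => ?_⟩
    have h1 : u - c ∈ C₀ := Submodule.sub_mem _ huC₀ (hsub hcC)
    have h2 : u - c ≠ 0 := by
      intro h
      exact huC (by rwa [sub_eq_zero] at h ▸ hcC)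
    have h3 : d ≤ hammingNorm (u - c) := hmin _ h1 h2
    rw [← neg_add_eq_sub, ← hammingDist_eq_hammingNorm, hammingDist_comm] at h3
    omega
end

section
/- Let C₀ be an [n, k+1, d] MDS code over 𝔽_q and let C ⊆ C₀ be a k-dimensional linear subcode. Then every word u ∈ C₀ \ C satisfies d(u, C) = n − k, i.e., every word in C₀ \ C is a deep hole of C. -/
open Submodule

lemma exists_info_set {F : Type*} [Field F] (n k : ℕ) (C : Submodule F (Fin n → F))
    (hdim : Module.finrank F C = k) :
    ∃ S : Finset (Fin n), S.card = k ∧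
      ∀ u : Fin n → F, ∃ c ∈ C, ∀ i ∈ S, c i = u i := by
  classical
  set φ : Fin n → Module.Dual F C := fun i => (LinearMap.proj i).comp C.subtype with hφ
  set W : Submodule F (Module.Dual F C) := span F (Set.range φ) with hW
  have hsep : ∀ x : C, (∀ i, φ i x = 0) → x = 0 := by
    intro x hx; ext i; exact hx i
  have hcoann : W.dualCoannihilator = ⊥ := by
    rw [eq_bot_iff]
    intro x hx
    rw [hW, Submodule.mem_dualCoannihilator] at hx
    have : x = 0 := hsep x (fun i => hx (φ i) (subset_span ⟨i, rfl⟩))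
    simp [this]
  have hrkW : Module.finrank F W = k := by
    have := Subspace.finrank_add_finrank_dualCoannihilator_eq W
    rw [hcoann, finrank_bot, hdim] at this
    omega
  obtain ⟨t, hts, htspan, htind⟩ := exists_linearIndependent F (Set.range φ)
  have htfin : t.Finite := (Set.finite_range φ).subset hts
  haveI : Fintype t := htfin.fintype
  have hcardt : Fintype.card t = k := by
    have h1 : Module.finrank F (span F t) = t.toFinset.card :=
      finrank_span_set_eq_card htind
    rw [htspan, ← hW, hrkW] at h1
    rw [Set.toFinset_card] at h1
    omega
  -- choose an index for each basis functional
  have hchoice : ∀ f : t, ∃ i : Fin n, φ i = (f : Module.Dual F C) := fun f => hts f.2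
  choose e he using hchoice
  have heinj : Function.Injective e := by
    intro f g h
    have : (f : Module.Dual F C) = g := by rw [← he f, ← he g, h]
    exact Subtype.ext this
  set S : Finset (Fin n) := Finset.image e Finset.univ with hS
  have hcardS : S.card = k := by
    rw [hS, Finset.card_image_of_injective _ heinj, Finset.card_univ, hcardt]
  refine ⟨S, hcardS, ?_⟩
  set r : C →ₗ[F] (S → F) := LinearMap.pi (fun i => φ i.1) with hr
  have hrinj : Function.Injective r := by
    rw [← LinearMap.ker_eq_bot, eq_bot_iff]
    intro x hx
    rw [LinearMap.mem_ker] at hx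
    have hxS : ∀ i ∈ S, φ i x = 0 := fun i hi => congrFun hx ⟨i, hi⟩
    have hxt : ∀ f ∈ t, f x = 0 := by
      intro f hf
      have h2 : e ⟨f, hf⟩ ∈ S := by simp [hS]
      have h3 := hxS _ h2
      rwa [he ⟨f, hf⟩] at h3
    have hxW : ∀ f ∈ W, f x = 0 := by
      intro f hf
      have hle : W ≤ LinearMap.ker ((LinearMap.applyₗ x : Module.Dual F C →ₗ[F] F)) := by
        rw [hW, ← htspan, span_le]  -- span t ≤ ker
        intro g hg
        simpa using hxt g hg
      simpa using hle hf
    have : x = 0 := hsep x (fun i => hxW (φ i) (subset_span ⟨i, rfl⟩))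
    simp [this]
  have hrsurj : Function.Surjective r := by
    have hfr : Module.finrank F C = Module.finrank F (S → F) := by
      rw [hdim, Module.finrank_pi, Fintype.card_coe, hcardS]
    exact (LinearMap.injective_iff_surjective_of_finrank_eq_finrank hfr).mp hrinj
  intro u
  obtain ⟨x, hx⟩ := hrsurj (fun i => u i.1)
  exact ⟨x.1, x.2, fun i hi => congrFun hx ⟨i, hi⟩⟩

/-- If `C₀` is an `[n, k+1, d]` MDS code over `𝔽_q` and `C ⊆ C₀` is a
`k`-dimensional subcode, then every word `u ∈ C₀ \ C` satisfies `d(u, C) = n - k`,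
i.e. every word of `C₀ \ C` is a deep hole of `C` (the covering radius of `C`
being `n - k`). -/
theorem stmt_1 {F : Type*} [Field F] [Fintype F] [DecidableEq F]
    (n k d : ℕ) (C₀ C : Submodule F (Fin n → F))
    (hsub : C ≤ C₀)
    (hdim₀ : Module.finrank F C₀ = k + 1)
    (hdim : Module.finrank F C = k)
    (hmin : ∀ x ∈ C₀, x ≠ 0 → d ≤ hammingNorm x)
    (hach : ∃ x ∈ C₀, x ≠ 0 ∧ hammingNorm x = d)
    (hMDS : d = n - (k + 1) + 1) :
    ∀ u ∈ C₀, u ∉ C →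
      (∀ c ∈ C, n - k ≤ hammingDist u c) ∧ (∃ c ∈ C, hammingDist u c = n - k) := by
  classical
  intro u huC₀ huC
  have hkn : k + 1 ≤ n := by
    have h1 := Submodule.finrank_le C₀
    rw [hdim₀, Module.finrank_pi, Fintype.card_fin] at h1
    exact h1
  have hd : d = n - k := by omega
  have hlow : ∀ c ∈ C, n - k ≤ hammingDist u c := by
    intro c hc
    have hmem : u - c ∈ C₀ := C₀.sub_mem huC₀ (hsub hc)
    have hne : u - c ≠ 0 := by
      intro h
      exact huC (by rwa [sub_eq_zero] at h ▸ hc)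
    have := hmin _ hmem hne
    rw [hd] at this
    rwa [hammingDist_comm, hammingDist_eq_hammingNorm, neg_add_eq_sub]
  refine ⟨hlow, ?_⟩
  obtain ⟨S, hcard, hsurj⟩ := exists_info_set n k C hdim
  obtain ⟨c, hcC, hagree⟩ := hsurj u
  refine ⟨c, hcC, le_antisymm ?_ (hlow c hcC)⟩
  have hsubset : (Finset.univ.filter fun i => u i ≠ c i) ⊆ Sᶜ := by
    intro i hi
    rw [Finset.mem_filter] at hi
    rw [Finset.mem_compl]
    intro hiS
    exact hi.2 (hagree i hiS).symm
  calc hammingDist u c = (Finset.univ.filter fun i => u i ≠ c i).card := rfl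
    _ ≤ Sᶜ.card := Finset.card_le_card hsubset
    _ = n - k := by rw [Finset.card_compl, hcard, Fintype.card_fin]
end

section
/- Let S = {a₁,…,a_s} ⊆ 𝔽_q and let 0 = t₁ < t₂ < ⋯ < t_s = m−1 together with r₁ < ⋯ < r_{s'} form a partition of {0,1,…,m−1} with m = s + s'. Then the determinant of the s×s matrix whose (i,j) entry is a_j^{t_i} equals (∏_{1≤i<j≤s} (a_j − a_i)) times the determinant of the s'×s' matrix whose (i,j) entry is S_{s − r_j + i − 1}(S), where S_i(S) denotes the i-th elementary symmetric polynomial in a₁,…,a_s (with S_0 = 1 and S_i = 0 for i < 0 or i > s). -/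
/-- `esymmZ a k` is the `k`-th elementary symmetric polynomial in the values of `a`,
with the convention that it is `0` for negative `k` (and automatically `0` for `k > s`). -/
noncomputable def esymmZ {F : Type*} [CommRing F] {s : ℕ} (a : Fin s → F) (k : ℤ) : F :=
  if 0 ≤ k then
    ∑ u ∈ Finset.powersetCard k.toNat (Finset.univ : Finset (Fin s)), ∏ w ∈ u, a w
  else 0

open Matrix Polynomial Finset Equiv

theorem det_mul_toBlocks {α β R : Type*} [Fintype α] [Fintype β] [DecidableEq α] [DecidableEq β]
    [CommRing R] (X Y : Matrix (α ⊕ β) (α ⊕ β) R) (h : X * Y = 1) :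
    X.det * (Y.toBlocks₁₁).det = (X.toBlocks₂₂).det := by
  have h' : Matrix.fromBlocks X.toBlocks₁₁ X.toBlocks₁₂ X.toBlocks₂₁ X.toBlocks₂₂ *
      Matrix.fromBlocks Y.toBlocks₁₁ Y.toBlocks₁₂ Y.toBlocks₂₁ Y.toBlocks₂₂ =
      Matrix.fromBlocks 1 0 0 1 := by
    rw [Matrix.fromBlocks_toBlocks, Matrix.fromBlocks_toBlocks, h, Matrix.fromBlocks_one]
  rw [Matrix.fromBlocks_multiply] at h'
  have e11 : X.toBlocks₁₁ * Y.toBlocks₁₁ + X.toBlocks₁₂ * Y.toBlocks₂₁ = 1 := by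
    have := congrArg Matrix.toBlocks₁₁ h'
    rwa [Matrix.toBlocks_fromBlocks₁₁, Matrix.toBlocks_fromBlocks₁₁] at this
  have e21 : X.toBlocks₂₁ * Y.toBlocks₁₁ + X.toBlocks₂₂ * Y.toBlocks₂₁ = 0 := by
    have := congrArg Matrix.toBlocks₂₁ h'
    rwa [Matrix.toBlocks_fromBlocks₂₁, Matrix.toBlocks_fromBlocks₂₁] at this
  have key : X * Matrix.fromBlocks Y.toBlocks₁₁ 0 Y.toBlocks₂₁ 1 =
      Matrix.fromBlocks 1 X.toBlocks₁₂ 0 X.toBlocks₂₂ := by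
    conv_lhs => rw [← Matrix.fromBlocks_toBlocks X]
    rw [Matrix.fromBlocks_multiply]
    simp [e11, e21]
  have := congrArg Matrix.det key
  rwa [Matrix.det_mul, Matrix.det_fromBlocks_zero₁₂, Matrix.det_fromBlocks_zero₂₁,
    Matrix.det_one, mul_one, Matrix.det_one, one_mul] at this

theorem sign_eq_signAux' {n : ℕ} (σ : Equiv.Perm (Fin n)) :
    Equiv.Perm.sign σ = Equiv.Perm.signAux σ := by
  refine Equiv.Perm.swap_induction_on σ ?_ ?_
  · simp [Equiv.Perm.signAux_one]
  · intro f x y hxy ih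
    rw [Equiv.Perm.sign_mul, Equiv.Perm.signAux_mul, Equiv.Perm.sign_swap hxy,
      Equiv.Perm.signAux_swap hxy, ih]

theorem card_filter_lt_fin {n : ℕ} (i : Fin n) :
    (Finset.univ.filter (fun j : Fin n => j < i)).card = (i : ℕ) := by
  have : (Finset.univ.filter (fun j : Fin n => j < i)) = Finset.Iio i := by
    ext j; simp
  rw [this, Fin.card_Iio]


theorem coeff_sum_qf {R : Type*} [CommRing R] (q f : R[X]) (n l : ℕ) (hq : q.natDegree < n) :
    ∑ c ∈ Finset.range n, q.coeff c * ((X : R[X]) ^ c * f).coeff l = (q * f).coeff l := by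
  conv_rhs => rw [q.as_sum_range' n hq]
  rw [Finset.sum_mul, finset_sum_coeff]
  refine Finset.sum_congr rfl fun c _ => ?_
  rw [← C_mul_X_pow_eq_monomial, mul_assoc, coeff_C_mul]

section sign
variable {m s s' : ℕ}

theorem card_filter_r_lt (t : Fin s → ℕ) (r : Fin s' → ℕ) (ht : StrictMono t) (hr : StrictMono r)
    (hcover : ∀ x, x < m ↔ ((∃ i, t i = x) ∨ (∃ i, r i = x)))
    (hdisj : ∀ i j, t i ≠ r j) (i : Fin s) :
    (Finset.univ.filter fun j : Fin s' => r j < t i).card = t i - (i : ℕ) := by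
  have htm : t i < m := (hcover (t i)).mpr (Or.inl ⟨i, rfl⟩)
  have h1 : Finset.range (t i) =
      ((Finset.univ.filter (fun i' : Fin s => i' < i)).image t) ∪
      ((Finset.univ.filter fun j : Fin s' => r j < t i).image r) := by
    ext x
    simp only [Finset.mem_range, Finset.mem_union, Finset.mem_image, Finset.mem_filter,
      Finset.mem_univ, true_and]
    constructor
    · intro hx
      rcases (hcover x).mp (hx.trans htm) with ⟨i', hi'⟩ | ⟨j, hj⟩
      · exact Or.inl ⟨i', ht.lt_iff_lt.mp (by omega), hi'⟩
      · exact Or.inr ⟨j, by omega, hj⟩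
    · rintro (⟨i', hi', rfl⟩ | ⟨j, hj, rfl⟩)
      · exact ht hi'
      · exact hj
  have hdis : Disjoint ((Finset.univ.filter (fun i' : Fin s => i' < i)).image t)
      ((Finset.univ.filter fun j : Fin s' => r j < t i).image r) := by
    rw [Finset.disjoint_left]
    rintro x hx hx'
    obtain ⟨i', _, rfl⟩ := Finset.mem_image.mp hx
    obtain ⟨j, _, hj⟩ := Finset.mem_image.mp hx'
    exact hdisj i' j hj.symm
  have hc := congrArg Finset.card h1
  rw [Finset.card_range, Finset.card_union_of_disjoint hdis,
    Finset.card_image_of_injective _ ht.injective,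
    Finset.card_image_of_injective _ hr.injective] at hc
  have hio : (Finset.univ.filter (fun i' : Fin s => i' < i)).card = (i : ℕ) := by
    have he : (Finset.univ.filter (fun j : Fin s => j < i)) = Finset.Iio i := by
      ext j; simp
    rw [he, Fin.card_Iio]
  rw [hio] at hc
  omega

theorem sign_riffle (hm : m = s + s') (t : Fin s → ℕ) (r : Fin s' → ℕ)
    (ht : StrictMono t) (hr : StrictMono r)
    (hcover : ∀ x, x < m ↔ ((∃ i, t i = x) ∨ (∃ i, r i = x)))
    (hdisj : ∀ i j, t i ≠ r j)
    (ρ : Equiv.Perm (Fin m))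
    (hρ1 : ∀ (k : Fin m) (h : (k : ℕ) < s), (ρ k : ℕ) = t ⟨k, h⟩)
    (hρ2 : ∀ (k : Fin m) (h : (k : ℕ) - s < s'), s ≤ (k : ℕ) → (ρ k : ℕ) = r ⟨(k : ℕ) - s, h⟩) :
    (Equiv.Perm.sign ρ : ℤˣ) = (-1) ^ (∑ i : Fin s, ((t i : ℕ) - (i : ℕ))) := by
  rw [sign_eq_signAux' ρ]
  rw [show Equiv.Perm.signAux ρ =
    ∏ x ∈ Equiv.Perm.finPairsLT m, if ρ x.1 ≤ ρ x.2 then (-1 : ℤˣ) else 1 from rfl]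
  rw [← Finset.prod_filter_mul_prod_filter_not (Equiv.Perm.finPairsLT m)
    (fun x => ρ x.1 ≤ ρ x.2)]
  have h2 : ∏ x ∈ (Equiv.Perm.finPairsLT m).filter (fun x => ¬ ρ x.1 ≤ ρ x.2),
      (if ρ x.1 ≤ ρ x.2 then (-1 : ℤˣ) else 1) = 1 :=
    Finset.prod_eq_one fun x hx => if_neg (Finset.mem_filter.mp hx).2
  have h3 : ∏ x ∈ (Equiv.Perm.finPairsLT m).filter (fun x => ρ x.1 ≤ ρ x.2),
      (if ρ x.1 ≤ ρ x.2 then (-1 : ℤˣ) else 1) =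
      (-1) ^ ((Equiv.Perm.finPairsLT m).filter (fun x => ρ x.1 ≤ ρ x.2)).card := by
    rw [← Finset.prod_const]
    exact Finset.prod_congr rfl fun x hx => if_pos (Finset.mem_filter.mp hx).2
  rw [h2, h3, mul_one]
  congr 1
  have hmem : ∀ x ∈ (Equiv.Perm.finPairsLT m).filter (fun x => ρ x.1 ≤ ρ x.2),
      ((x.2 : ℕ) < s ∧ s ≤ (x.1 : ℕ) ∧
        ∀ (h1 : (x.2 : ℕ) < s) (h2 : (x.1 : ℕ) - s < s'),
          r ⟨(x.1 : ℕ) - s, h2⟩ < t ⟨(x.2 : ℕ), h1⟩) := by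
    intro x hx
    obtain ⟨hlt, hinv⟩ := Finset.mem_filter.mp hx
    rw [Equiv.Perm.mem_finPairsLT] at hlt
    have hlt' : (x.2 : ℕ) < (x.1 : ℕ) := hlt
    have hb1 : (x.1 : ℕ) < m := x.1.isLt
    have hb2 : (x.2 : ℕ) < m := x.2.isLt
    have hne : ρ x.1 ≠ ρ x.2 := fun h => by
      have := ρ.injective h
      rw [this] at hlt'
      omega
    have hinv' : (ρ x.1 : ℕ) < (ρ x.2 : ℕ) := by
      have : ρ x.1 < ρ x.2 := lt_of_le_of_ne hinv hne
      exact this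
    have hx2s : (x.2 : ℕ) < s := by
      by_contra hc
      push_neg at hc
      have h1 : s ≤ (x.1 : ℕ) := le_trans hc (le_of_lt hlt')
      have e1 := hρ2 x.1 (by omega) h1
      have e2 := hρ2 x.2 (by omega) hc
      rw [e1, e2] at hinv'
      have := hr.lt_iff_lt.mp hinv'
      simp only [Fin.mk_lt_mk] at this
      omega
    have hx1s : s ≤ (x.1 : ℕ) := by
      by_contra hc
      push_neg at hc
      have e1 := hρ1 x.1 hc
      have e2 := hρ1 x.2 (by omega)
      rw [e1, e2] at hinv'
      have := ht.lt_iff_lt.mp hinv'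
      simp only [Fin.mk_lt_mk] at this
      omega
    refine ⟨hx2s, hx1s, fun h1 h2 => ?_⟩
    have e1 := hρ2 x.1 h2 hx1s
    have e2 := hρ1 x.2 h1
    rw [e1, e2] at hinv'
    exact hinv'
  rw [show (∑ i : Fin s, ((t i : ℕ) - (i : ℕ))) =
      ∑ i : Fin s, (Finset.univ.filter fun j : Fin s' => r j < t i).card from
    Finset.sum_congr rfl fun i _ => (card_filter_r_lt t r ht hr hcover hdisj i).symm]
  rw [← Finset.card_sigma]
  refine Finset.card_bij'
    (i := fun x hx => (⟨⟨(x.2 : ℕ), (hmem x hx).1⟩,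
      ⟨(x.1 : ℕ) - s, by have := x.1.isLt; have := (hmem x hx).2.1; omega⟩⟩ : Σ _ : Fin s, Fin s'))
    (j := fun y _ => (⟨⟨s + (y.2 : ℕ), by have := y.2.isLt; omega⟩,
      ⟨(y.1 : ℕ), by have := y.1.isLt; omega⟩⟩ : Σ _ : Fin m, Fin m)) ?_ ?_ ?_ ?_
  · intro x hx
    obtain ⟨h1, h2, h3⟩ := hmem x hx
    simp only [Finset.mem_sigma, Finset.mem_univ, Finset.mem_filter, true_and]
    exact h3 h1 (by have := x.1.isLt; omega)
  · intro y hy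
    simp only [Finset.mem_sigma, Finset.mem_univ, Finset.mem_filter, true_and] at hy
    have hy2 := y.2.isLt
    have hy1 := y.1.isLt
    rw [Finset.mem_filter]
    refine ⟨?_, ?_⟩
    · rw [Equiv.Perm.mem_finPairsLT]
      show ((⟨(y.1 : ℕ), by omega⟩ : Fin m)) < (⟨s + (y.2 : ℕ), by omega⟩ : Fin m)
      rw [Fin.lt_def]
      show (y.1 : ℕ) < s + (y.2 : ℕ)
      omega
    · show ρ ⟨s + (y.2 : ℕ), by omega⟩ ≤ ρ ⟨(y.1 : ℕ), by omega⟩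
      rw [Fin.le_def]
      have e1 : ((ρ (⟨s + (y.2 : ℕ), by omega⟩ : Fin m)) : ℕ) = r y.2 := by
        rw [hρ2 ⟨s + (y.2 : ℕ), by omega⟩ (by show s + (y.2 : ℕ) - s < s'; omega)
          (by show s ≤ s + (y.2 : ℕ); omega)]
        exact congrArg r (Fin.ext (by show s + (y.2 : ℕ) - s = (y.2 : ℕ); omega))
      have e2 : ((ρ (⟨(y.1 : ℕ), by omega⟩ : Fin m)) : ℕ) = t y.1 := by
        rw [hρ1 ⟨(y.1 : ℕ), by omega⟩ (by show (y.1 : ℕ) < s; omega)]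
      rw [e1, e2]
      exact le_of_lt hy
  · intro x hx
    obtain ⟨h1, h2, _⟩ := hmem x hx
    rcases x with ⟨x1, x2⟩
    have h2' : s ≤ (x1 : ℕ) := h2
    have hpair : ∀ (u w : Fin m) (v z : Fin m), u = w → v = z →
        (⟨u, v⟩ : Σ _ : Fin m, Fin m) = ⟨w, z⟩ := by
      rintro u w v z rfl rfl; rfl
    exact hpair _ _ _ _ (Fin.ext (by show s + ((x1 : ℕ) - s) = (x1 : ℕ); omega))
      (Fin.ext rfl)
  · intro y hy
    rcases y with ⟨y1, y2⟩
    have hpair : ∀ (u w : Fin s) (v z : Fin s'), u = w → v = z →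
        (⟨u, v⟩ : Σ _ : Fin s, Fin s') = ⟨w, z⟩ := by
      rintro u w v z rfl rfl; rfl
    exact hpair _ _ _ _ (Fin.ext rfl)
      (Fin.ext (by show s + (y2 : ℕ) - s = (y2 : ℕ); omega))
end sign

theorem fin_le_strictMono {s : ℕ} {t : Fin s → ℕ} (ht : StrictMono t) (i : Fin s) :
    (i : ℕ) ≤ t i := by
  have key : ∀ v (hv : v < s), v ≤ t ⟨v, hv⟩ := by
    intro v
    induction v with
    | zero => intro hv; exact Nat.zero_le _
    | succ n ih =>
      intro hv
      have hn : n < s := by omega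
      have h1 := ht (show (⟨n, hn⟩ : Fin s) < ⟨n + 1, hv⟩ from by simp [Fin.lt_def])
      have h2 := ih hn
      omega
  have := key i.1 i.2
  simpa using this

/-- Generalized Vandermonde determinant: if `0 = t₁ < ⋯ < t_s = m-1` together with
`r₁ < ⋯ < r_{s'}` partition `{0, …, m-1}` with `m = s + s'`, and `a₁, …, a_s` are
distinct elements, then `det (a_j^{t_i}) = ∏_{i<j} (a_j - a_i) · det (S_{s - r_j + i - 1})`
(with the matrix entries `S_{s-r_j+i-1}` written here with `0`-indexed `i`). -/
theorem stmt_3 {F : Type*} [Field F] (m s s' : ℕ) (hs : 0 < s)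
    (hm : m = s + s')
    (t : Fin s → ℕ) (r : Fin s' → ℕ)
    (ht : StrictMono t) (hr : StrictMono r)
    (ht0 : t ⟨0, hs⟩ = 0) (htl : t ⟨s - 1, Nat.sub_lt hs one_pos⟩ = m - 1)
    (hcover : ∀ x, x < m ↔ ((∃ i, t i = x) ∨ (∃ i, r i = x)))
    (hdisj : ∀ i j, t i ≠ r j)
    (a : Fin s → F) (ha : Function.Injective a) :
    Matrix.det (Matrix.of fun i j : Fin s => a j ^ t i) =
      (∏ i : Fin s, ∏ j ∈ Finset.Ioi i, (a j - a i)) *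
        Matrix.det (Matrix.of fun i j : Fin s' =>
          esymmZ a ((s : ℤ) - (r j : ℤ) + (i : ℤ))) := by
  classical
  set f : Polynomial F := ∏ j : Fin s, (Polynomial.X - Polynomial.C (a j)) with hf
  have hfmonic : f.Monic :=
    Polynomial.monic_prod_of_monic _ _ (fun j _ => Polynomial.monic_X_sub_C (a j))
  have hfd : f.natDegree = s := by
    rw [hf, Polynomial.natDegree_prod_of_monic _ _ (fun j _ => Polynomial.monic_X_sub_C (a j))]
    simp [Polynomial.natDegree_X_sub_C]
  have hfne1 : f ≠ 1 := by
    intro h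
    have := congrArg Polynomial.natDegree h
    rw [hfd, Polynomial.natDegree_one] at this
    omega
  have hfe : ∀ j, f.eval (a j) = 0 := by
    intro j
    rw [hf, Polynomial.eval_prod]
    apply Finset.prod_eq_zero (Finset.mem_univ j)
    simp
  have hremlt : ∀ k : ℕ, ((Polynomial.X : Polynomial F) ^ k %ₘ f).natDegree < s := by
    intro k
    have := Polynomial.natDegree_modByMonic_lt ((Polynomial.X : Polynomial F) ^ k) hfmonic hfne1
    omega
  -- the coefficient matrix
  set Cmat : Matrix (Fin s) (Fin s) F :=
    Matrix.of (fun i d : Fin s => ((Polynomial.X : Polynomial F) ^ (t i) %ₘ f).coeff d) with hC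
  -- Step A : the generalized Vandermonde factors through Cmat
  have hstepA : Matrix.det (Matrix.of fun i j : Fin s => a j ^ t i) =
      Cmat.det * (∏ i : Fin s, ∏ j ∈ Finset.Ioi i, (a j - a i)) := by
    have hNCV : (Matrix.of fun i j : Fin s => a j ^ t i) =
        Cmat * (Matrix.vandermonde a)ᵀ := by
      ext i j
      rw [Matrix.mul_apply]
      have h1 : a j ^ t i = ((Polynomial.X : Polynomial F) ^ (t i)).eval (a j) := by simp
      have h2 : ((Polynomial.X : Polynomial F) ^ (t i)).eval (a j) =
          ((Polynomial.X : Polynomial F) ^ (t i) %ₘ f).eval (a j) := by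
        conv_lhs => rw [← Polynomial.modByMonic_add_div
          ((Polynomial.X : Polynomial F) ^ (t i)) f]
        simp [hfe j]
      rw [Matrix.of_apply, h1, h2, Polynomial.eval_eq_sum_range' (hremlt (t i)) (a j),
        ← Fin.sum_univ_eq_sum_range]
      apply Finset.sum_congr rfl
      intro d _
      simp [Cmat, Matrix.transpose_apply, Matrix.vandermonde]
    rw [hNCV, Matrix.det_mul, Matrix.det_transpose, Matrix.det_vandermonde]
  set Emat : Matrix (Fin s') (Fin s') F :=
    Matrix.of (fun i j : Fin s' => esymmZ a ((s : ℤ) - (r j : ℤ) + (i : ℤ))) with hE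
  rw [hstepA, mul_comm]
  congr 1
  -- It remains to prove : Cmat.det = Emat.det
  have htb : ∀ i, t i < m := fun i => (hcover (t i)).mpr (Or.inl ⟨i, rfl⟩)
  have hrb : ∀ j, r j < m := fun j => (hcover (r j)).mpr (Or.inr ⟨j, rfl⟩)
  set σ0 : Fin s ⊕ Fin s' → Fin m :=
    Sum.elim (fun i => ⟨t i, htb i⟩) (fun j => ⟨r j, hrb j⟩) with hσ0
  have hσinj : Function.Injective σ0 := by
    rintro (i | i) (j | j) h <;>
      simp only [σ0, Sum.elim_inl, Sum.elim_inr, Fin.mk.injEq] at h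
    · exact congrArg Sum.inl (ht.injective h)
    · exact absurd h (hdisj i j)
    · exact absurd h.symm (hdisj j i)
    · exact congrArg Sum.inr (hr.injective h)
  have hσbij : Function.Bijective σ0 := by
    rw [Fintype.bijective_iff_injective_and_card]
    exact ⟨hσinj, by simp [hm]⟩
  set e : (Fin s ⊕ Fin s') ≃ Fin m := Equiv.ofBijective σ0 hσbij with hedef
  have he1 : ∀ i : Fin s, ((e (Sum.inl i)) : ℕ) = t i := fun i => rfl
  have he2 : ∀ j : Fin s', ((e (Sum.inr j)) : ℕ) = r j := fun j => rfl
  set ψ : (Fin s ⊕ Fin s') ≃ Fin m := finSumFinEquiv.trans (finCongr hm.symm) with hψdef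
  have hψ1 : ∀ i : Fin s, ((ψ (Sum.inl i)) : ℕ) = (i : ℕ) := by intro i; simp [ψ]
  have hψ2 : ∀ j : Fin s', ((ψ (Sum.inr j)) : ℕ) = s + (j : ℕ) := by intro j; simp [ψ]
  set Bstd : Matrix (Fin m) (Fin m) F := Matrix.of (fun k l =>
    if (k : ℕ) < s then (if (l : ℕ) = (k : ℕ) then 1 else 0)
    else ((Polynomial.X : Polynomial F) ^ ((k : ℕ) - s) * f).coeff l) with hB
  have hXdeg : ∀ k : ℕ, s ≤ k →
      ((Polynomial.X : Polynomial F) ^ (k - s) * f).natDegree = k := by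
    intro k hk
    rw [(Polynomial.monic_X_pow _).natDegree_mul hfmonic, Polynomial.natDegree_X_pow, hfd]
    omega
  have hBtri : Bstd.BlockTriangular OrderDual.toDual := by
    intro i j hij
    have hij' : (i : ℕ) < (j : ℕ) := hij
    simp only [Bstd, Matrix.of_apply]
    by_cases hks : (i : ℕ) < s
    · rw [if_pos hks, if_neg (by omega)]
    · rw [if_neg hks]
      apply Polynomial.coeff_eq_zero_of_natDegree_lt
      rw [hXdeg i (by omega)]
      omega
  have hBdet : Bstd.det = 1 := by
    rw [Matrix.det_of_lowerTriangular Bstd hBtri]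
    apply Finset.prod_eq_one
    intro k _
    simp only [Bstd, Matrix.of_apply]
    by_cases hks : (k : ℕ) < s
    · rw [if_pos hks]
      simp
    · rw [if_neg hks]
      have hmon : ((Polynomial.X : Polynomial F) ^ ((k : ℕ) - s) * f).Monic :=
        (Polynomial.monic_X_pow _).mul hfmonic
      have hcn := hmon.coeff_natDegree
      rwa [hXdeg k (by omega)] at hcn
  set Xmat : Matrix (Fin s ⊕ Fin s') (Fin s ⊕ Fin s') F := Bstd.submatrix ψ e with hXm
  set Ymat : Matrix (Fin s ⊕ Fin s') (Fin s ⊕ Fin s') F := Matrix.of (fun o b =>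
    Sum.elim (fun d : Fin s => ((Polynomial.X : Polynomial F) ^ ((e o : ℕ)) %ₘ f).coeff d)
      (fun c : Fin s' => ((Polynomial.X : Polynomial F) ^ ((e o : ℕ)) /ₘ f).coeff c) b) with hYm
  have hX1 : ∀ (d : Fin s) o', Xmat (Sum.inl d) o' =
      if ((e o' : ℕ) = (d : ℕ)) then 1 else 0 := by
    intro d o'
    simp only [Xmat, Matrix.submatrix_apply, Bstd, Matrix.of_apply]
    rw [if_pos (by rw [hψ1 d]; exact d.isLt), hψ1 d]
  have hX2 : ∀ (c : Fin s') o', Xmat (Sum.inr c) o' =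
      ((Polynomial.X : Polynomial F) ^ (c : ℕ) * f).coeff (e o') := by
    intro c o'
    simp only [Xmat, Matrix.submatrix_apply, Bstd, Matrix.of_apply]
    rw [if_neg (by rw [hψ2 c]; omega), hψ2 c]
    have hcc : s + (c : ℕ) - s = (c : ℕ) := by omega
    rw [hcc]
  have hXY : Xmat * Ymat = 1 := by
    rw [mul_eq_one_comm]
    ext o o'
    rw [Matrix.mul_apply, Fintype.sum_sum_type]
    have h1 : ∑ d : Fin s, Ymat o (Sum.inl d) * Xmat (Sum.inl d) o' =
        ((Polynomial.X : Polynomial F) ^ (e o : ℕ) %ₘ f).coeff (e o') := by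
      have hrw : ∀ d : Fin s, Ymat o (Sum.inl d) * Xmat (Sum.inl d) o' =
          ((Polynomial.X : Polynomial F) ^ (e o : ℕ) %ₘ f).coeff d *
            (if ((e o' : ℕ) = (d : ℕ)) then 1 else 0) := fun d => by rw [hX1]; rfl
      rw [Finset.sum_congr rfl (fun d _ => hrw d)]
      by_cases h : (e o' : ℕ) < s
      · rw [Finset.sum_eq_single (⟨(e o' : ℕ), h⟩ : Fin s)]
        · simp
        · intro d _ hne
          rw [if_neg (fun hc => hne (Fin.ext hc.symm)), mul_zero]
        · intro hmem
          exact absurd (Finset.mem_univ _) hmem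
      · rw [Finset.sum_eq_zero, eq_comm]
        · exact Polynomial.coeff_eq_zero_of_natDegree_lt
            (lt_of_lt_of_le (hremlt _) (by omega))
        · intro d _
          rw [if_neg (fun hc => h (by rw [hc]; exact d.isLt)), mul_zero]
    have h2 : ∑ c : Fin s', Ymat o (Sum.inr c) * Xmat (Sum.inr c) o' =
        (((Polynomial.X : Polynomial F) ^ (e o : ℕ) /ₘ f) * f).coeff (e o') := by
      have hrw : ∀ c : Fin s', Ymat o (Sum.inr c) * Xmat (Sum.inr c) o' =
          ((Polynomial.X : Polynomial F) ^ (e o : ℕ) /ₘ f).coeff c *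
            ((Polynomial.X : Polynomial F) ^ (c : ℕ) * f).coeff (e o') :=
        fun c => by rw [hX2]; rfl
      rw [Finset.sum_congr rfl (fun c _ => hrw c)]
      by_cases hq0 : (Polynomial.X : Polynomial F) ^ (e o : ℕ) /ₘ f = 0
      · rw [hq0]
        simp
      · have hk : s ≤ (e o : ℕ) := by
          by_contra hc
          push_neg at hc
          apply hq0
          rw [Polynomial.divByMonic_eq_zero_iff hfmonic, Polynomial.degree_X_pow,
            Polynomial.degree_eq_natDegree hfmonic.ne_zero, hfd]
          exact_mod_cast hc
        have hqd : ((Polynomial.X : Polynomial F) ^ (e o : ℕ) /ₘ f).natDegree < s' := by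
          rw [Polynomial.natDegree_divByMonic _ hfmonic, Polynomial.natDegree_X_pow, hfd]
          have := (e o).isLt
          omega
        rw [Fin.sum_univ_eq_sum_range (fun c =>
          ((Polynomial.X : Polynomial F) ^ (e o : ℕ) /ₘ f).coeff c *
            ((Polynomial.X : Polynomial F) ^ c * f).coeff (e o')) s']
        exact coeff_sum_qf _ f s' _ hqd
    rw [h1, h2, ← Polynomial.coeff_add]
    rw [show ((Polynomial.X : Polynomial F) ^ (e o : ℕ) %ₘ f) +
        ((Polynomial.X : Polynomial F) ^ (e o : ℕ) /ₘ f) * f =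
        (Polynomial.X : Polynomial F) ^ (e o : ℕ) from by
      rw [mul_comm]
      exact Polynomial.modByMonic_add_div _ f]
    rw [Polynomial.coeff_X_pow, Matrix.one_apply]
    by_cases h : o = o'
    · rw [if_pos h, if_pos (by rw [h])]
    · rw [if_neg h, if_neg]
      intro hc
      exact h (e.injective (Fin.ext hc)).symm
  have hY11 : Ymat.toBlocks₁₁ = Cmat := by
    ext i d
    rfl
  have hblock := det_mul_toBlocks Xmat Ymat hXY
  rw [hY11] at hblock
  -- determinant of Xmat is a sign
  set τ : Equiv.Perm (Fin s ⊕ Fin s') := ψ.trans e.symm with hτ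
  have hXsub : Xmat = (Bstd.submatrix ⇑e ⇑e).submatrix ⇑τ id := by
    ext b o
    simp [Xmat, τ, Matrix.submatrix_apply]
  have hXdet : Xmat.det = (((Equiv.Perm.sign τ : ℤˣ) : ℤ) : F) := by
    rw [hXsub, Matrix.det_permute, Matrix.det_submatrix_equiv_self, hBdet, mul_one]
  set ρ : Equiv.Perm (Fin m) := ψ.symm.trans e with hρdef
  have hsignτ : Equiv.Perm.sign τ = Equiv.Perm.sign ρ := by
    have hpc : ψ.permCongr τ = ρ⁻¹ := by
      apply Equiv.ext
      intro k
      simp [τ, ρ, Equiv.permCongr_apply, Equiv.Perm.inv_def, Equiv.symm_trans_apply]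
    calc Equiv.Perm.sign τ = Equiv.Perm.sign (ψ.permCongr τ) :=
          (Equiv.Perm.sign_permCongr ψ τ).symm
      _ = Equiv.Perm.sign ρ⁻¹ := by rw [hpc]
      _ = Equiv.Perm.sign ρ := Equiv.Perm.sign_inv ρ
  have hρ1 : ∀ (k : Fin m) (h : (k : ℕ) < s), (ρ k : ℕ) = t ⟨k, h⟩ := by
    intro k h
    have hsk : ψ.symm k = Sum.inl ⟨(k : ℕ), h⟩ := by
      rw [Equiv.symm_apply_eq]
      exact (Fin.ext (by rw [hψ1])).symm
    simp only [ρ, Equiv.trans_apply, hsk]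
    exact he1 _
  have hρ2 : ∀ (k : Fin m) (h : (k : ℕ) - s < s'), s ≤ (k : ℕ) →
      (ρ k : ℕ) = r ⟨(k : ℕ) - s, h⟩ := by
    intro k h hks
    have hsk : ψ.symm k = Sum.inr ⟨(k : ℕ) - s, h⟩ := by
      rw [Equiv.symm_apply_eq]
      refine (Fin.ext ?_).symm
      rw [hψ2]
      simp only [Fin.val_mk]
      omega
    simp only [ρ, Equiv.trans_apply, hsk]
    exact he2 _
  have hsignρ := sign_riffle hm t r ht hr hcover hdisj ρ hρ1 hρ2
  have hXdetF : Xmat.det = (-1 : F) ^ (∑ i : Fin s, ((t i : ℕ) - (i : ℕ))) := by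
    rw [hXdet, hsignτ, hsignρ]
    push_cast
    simp
  -- the second block of Xmat
  have hX22 : Xmat.toBlocks₂₂ = Matrix.of (fun c j : Fin s' =>
      ((Polynomial.X : Polynomial F) ^ (c : ℕ) * f).coeff (r j)) := by
    ext c j
    show Xmat (Sum.inr c) (Sum.inr j) = _
    rw [hX2]
    rw [he2 j]
    rfl
  have hentry : ∀ (c j : Fin s'), ((Polynomial.X : Polynomial F) ^ (c : ℕ) * f).coeff (r j) =
      (-1 : F) ^ (s + (c : ℕ) + r j) * esymmZ a ((s : ℤ) - (r j : ℤ) + (c : ℤ)) := by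
    intro c j
    rw [mul_comm ((Polynomial.X : Polynomial F) ^ (c : ℕ)) f, Polynomial.coeff_mul_X_pow']
    by_cases h1 : (c : ℕ) ≤ r j
    · rw [if_pos h1]
      by_cases h2 : r j - (c : ℕ) ≤ s
      · have hfm2 : f =
            ((Finset.univ.val.map a).map (fun x => Polynomial.X - Polynomial.C x)).prod := by
          rw [hf, Finset.prod_eq_multiset_prod, Multiset.map_map]
          rfl
        have hcard : Multiset.card (Finset.univ.val.map a) = s := by simp
        have hco := Multiset.prod_X_sub_C_coeff (Finset.univ.val.map a)
          (k := r j - (c : ℕ)) (by rw [hcard]; exact h2)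
        rw [hfm2, hco, hcard]
        have hesymm : (Finset.univ.val.map a).esymm (s - (r j - (c : ℕ))) =
            esymmZ a ((s : ℤ) - (r j : ℤ) + (c : ℤ)) := by
          rw [Finset.esymm_map_val, esymmZ, if_pos (by omega)]
          congr 2
          omega
        rw [hesymm]
        congr 1
        rw [neg_one_pow_eq_pow_mod_two, neg_one_pow_eq_pow_mod_two (n := s + (c : ℕ) + r j)]
        congr 1
        omega
      · push_neg at h2
        rw [Polynomial.coeff_eq_zero_of_natDegree_lt (by rw [hfd]; omega)]
        have hz : esymmZ a ((s : ℤ) - (r j : ℤ) + (c : ℤ)) = 0 := by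
          rw [esymmZ, if_neg (by omega)]
        rw [hz, mul_zero]
    · rw [if_neg h1]
      push_neg at h1
      have hz : esymmZ a ((s : ℤ) - (r j : ℤ) + (c : ℤ)) = 0 := by
        rw [esymmZ, if_pos (by omega)]
        rw [Finset.powersetCard_eq_empty.mpr (by simp; omega)]
        simp
      rw [hz, mul_zero]
  have hdetX22 : (Xmat.toBlocks₂₂).det =
      (-1 : F) ^ (∑ c : Fin s', (s + (c : ℕ))) *
        ((-1 : F) ^ (∑ j : Fin s', r j) * Emat.det) := by
    rw [hX22]
    have hsplit : Matrix.of (fun c j : Fin s' =>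
        ((Polynomial.X : Polynomial F) ^ (c : ℕ) * f).coeff (r j)) =
        Matrix.of (fun c j : Fin s' => (-1 : F) ^ (s + (c : ℕ)) *
          (Matrix.of (fun c' j' : Fin s' => (-1 : F) ^ (r j') * Emat c' j') c j)) := by
      ext c j
      rw [Matrix.of_apply, hentry c j, Matrix.of_apply, Matrix.of_apply,
        pow_add ((-1 : F)) (s + (c : ℕ)) (r j), mul_assoc]
      rfl
    rw [hsplit, Matrix.det_mul_column, Matrix.det_mul_row]
    rw [Finset.prod_pow_eq_pow_sum, Finset.prod_pow_eq_pow_sum]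
  -- final sign bookkeeping
  rw [hXdetF, hdetX22] at hblock
  set P := ∑ i : Fin s, ((t i : ℕ) - (i : ℕ)) with hPdef
  set Q1 := ∑ c : Fin s', (s + (c : ℕ)) with hQ1def
  set Q2 := ∑ j : Fin s', r j with hQ2def
  have hP : P + (∑ i : Fin s, (i : ℕ)) = ∑ i : Fin s, t i := by
    rw [hPdef, ← Finset.sum_add_distrib]
    apply Finset.sum_congr rfl
    intro i _
    have := fin_le_strictMono ht i
    omega
  have hsum : (∑ i : Fin s, t i) + (∑ j : Fin s', r j) = ∑ k : Fin m, (k : ℕ) := by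
    rw [← Equiv.sum_comp e (fun k : Fin m => (k : ℕ)), Fintype.sum_sum_type]
    rfl
  have hgauss : ∑ k : Fin m, (k : ℕ) =
      (∑ i : Fin s, (i : ℕ)) + (s' * s + ∑ c : Fin s', (c : ℕ)) := by
    rw [Fin.sum_univ_eq_sum_range (fun k => k) m]
    conv_lhs => rw [hm]
    rw [Finset.sum_range_add]
    rw [Fin.sum_univ_eq_sum_range (fun k => k) s, Fin.sum_univ_eq_sum_range (fun k => k) s']
    rw [Finset.sum_add_distrib, Finset.sum_const, Finset.card_range, smul_eq_mul]
  have hQ1 : Q1 = s' * s + ∑ c : Fin s', (c : ℕ) := by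
    rw [hQ1def, Finset.sum_add_distrib, Finset.sum_const, Finset.card_univ,
      Fintype.card_fin, smul_eq_mul]
  have heven : Even (P + (Q1 + Q2)) := by
    refine ⟨s' * s + ∑ c : Fin s', (c : ℕ), by omega⟩
  have hpow : (-1 : F) ^ P * (-1 : F) ^ P = 1 := by
    rw [← pow_add]
    exact Even.neg_one_pow ⟨P, rfl⟩
  calc Cmat.det = ((-1 : F) ^ P * (-1 : F) ^ P) * Cmat.det := by rw [hpow, one_mul]
    _ = (-1 : F) ^ P * ((-1 : F) ^ P * Cmat.det) := by ring
    _ = (-1 : F) ^ P * ((-1 : F) ^ Q1 * ((-1 : F) ^ Q2 * Emat.det)) := by rw [hblock]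
    _ = (-1 : F) ^ (P + (Q1 + Q2)) * Emat.det := by rw [pow_add, pow_add]; ring
    _ = Emat.det := by rw [heven.neg_one_pow, one_mul]
end

section
/- Let q be odd and 3 ≤ r ≤ q−2. For any η ∈ 𝔽_q^*, there exists a subset {x₁,…,x_r} of 𝔽_q^* of size r (all elements distinct and nonzero) such that x₁ + x₂ + ⋯ + x_r = η^{−1}. -/
section aux

variable {F : Type*} [Field F] [Fintype F] [DecidableEq F]

lemma aux_two_ne_zero (hodd : Odd (Fintype.card F)) : (2 : F) ≠ 0 := by
  apply Ring.two_ne_zero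
  intro h
  have := FiniteField.even_card_iff_char_two.mp h
  rw [Nat.odd_iff] at hodd
  omega

lemma aux_sum_univ (hodd : Odd (Fintype.card F)) : ∑ x : F, x = 0 := by
  have h : ∑ x : F, x = ∑ x : F, -x :=
    Fintype.sum_equiv (Equiv.neg F) _ _ (by simp)
  have h2 : (2 : F) * ∑ x : F, x = 0 := by
    rw [two_mul]
    nth_rewrite 2 [h]
    rw [← Finset.sum_add_distrib]
    simp
  rcases mul_eq_zero.mp h2 with h' | h'
  · exact absurd h' (aux_two_ne_zero hodd)
  · exact h'

/-- Step lemma: grow a nonzero-element set of size `r` with the same sum. -/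
lemma aux_step (hodd : Odd (Fintype.card F)) (r : ℕ) (c : F) (hr1 : 1 ≤ r)
    (hq : 2 * r + 2 ≤ Fintype.card F)
    (h : ∃ s : Finset F, s.card = r ∧ (∀ x ∈ s, x ≠ 0) ∧ ∑ x ∈ s, x = c) :
    ∃ s : Finset F, s.card = r + 1 ∧ (∀ x ∈ s, x ≠ 0) ∧ ∑ x ∈ s, x = c := by
  obtain ⟨s, hcard, hnz, hsum⟩ := h
  have hne : s.Nonempty := Finset.card_pos.mp (by omega)
  obtain ⟨x, hx⟩ := hne
  set T : Finset F :=
    insert 0 (insert x (insert (x / 2)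
      ((s.erase x) ∪ (s.erase x).image (fun w => x - w)))) with hT
  have hTcard : T.card ≤ 2 * r + 1 := by
    have h1 : ((s.erase x) ∪ (s.erase x).image (fun w => x - w)).card ≤ 2 * (r - 1) := by
      calc ((s.erase x) ∪ (s.erase x).image (fun w => x - w)).card
          ≤ (s.erase x).card + ((s.erase x).image (fun w => x - w)).card :=
            Finset.card_union_le _ _
        _ ≤ (s.erase x).card + (s.erase x).card := by
            have := Finset.card_image_le (s := s.erase x) (f := fun w => x - w)
            omega
        _ ≤ 2 * (r - 1) := by
            have := Finset.card_erase_of_mem hx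
            omega
    calc T.card ≤ ((s.erase x) ∪ (s.erase x).image (fun w => x - w)).card + 3 := by
          rw [hT]
          have i1 := Finset.card_insert_le (x / 2)
            ((s.erase x) ∪ (s.erase x).image (fun w => x - w))
          have i2 := Finset.card_insert_le x (insert (x / 2)
            ((s.erase x) ∪ (s.erase x).image (fun w => x - w)))
          have i3 := Finset.card_insert_le (0 : F) (insert x (insert (x / 2)
            ((s.erase x) ∪ (s.erase x).image (fun w => x - w))))
          omega
      _ ≤ 2 * r + 1 := by omega
  have hlt : T.card < Fintype.card F := by omega
  have hTne : ∃ y, y ∉ T := by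
    by_contra hcon
    push_neg at hcon
    have : T = Finset.univ := Finset.eq_univ_of_forall hcon
    rw [this, Finset.card_univ] at hlt
    omega
  obtain ⟨y, hy⟩ := hTne
  rw [hT] at hy
  simp only [Finset.mem_insert, Finset.mem_union, Finset.mem_image, not_or] at hy
  obtain ⟨hy0, hyx, hyh, hyerase, hyimg⟩ := hy
  push_neg at hyimg
  set z : F := x - y with hz
  have hz0 : z ≠ 0 := sub_ne_zero.mpr (fun h => hyx h.symm)
  have hzy : z ≠ y := by
    intro h
    apply hyh
    have h2 : (2 : F) ≠ 0 := aux_two_ne_zero hodd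
    field_simp
    rw [hz] at h
    linear_combination -h
  have hzerase : z ∉ s.erase x := by
    intro hmem
    exact (hyimg z hmem) (by rw [hz]; ring)
  refine ⟨insert y (insert z (s.erase x)), ?_, ?_, ?_⟩
  · rw [Finset.card_insert_of_notMem, Finset.card_insert_of_notMem hzerase,
      Finset.card_erase_of_mem hx]
    · omega
    · simp only [Finset.mem_insert, not_or]
      exact ⟨fun h => hzy h.symm, hyerase⟩
  · intro w hw
    simp only [Finset.mem_insert] at hw
    rcases hw with rfl | rfl | hw
    · exact hy0
    · exact hz0
    · exact hnz w (Finset.mem_of_mem_erase hw)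
  · rw [Finset.sum_insert, Finset.sum_insert hzerase]
    · have hse : ∑ w ∈ s.erase x, w = c - x := by
        have h' := Finset.add_sum_erase s (fun w => w) hx
        linear_combination h' + hsum
      rw [hse, hz]
      ring
    · simp only [Finset.mem_insert, not_or]
      exact ⟨fun h => hzy h.symm, hyerase⟩

lemma aux_main (hodd : Odd (Fintype.card F)) (r : ℕ) (c : F) (hr1 : 1 ≤ r)
    (hq : 2 * r ≤ Fintype.card F - 1) (hc : c ≠ 0) :
    ∃ s : Finset F, s.card = r ∧ (∀ x ∈ s, x ≠ 0) ∧ ∑ x ∈ s, x = c := by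
  have hq5 : 3 ≤ Fintype.card F := by
    have := Fintype.card_pos (α := F)
    omega
  induction r with
  | zero => omega
  | succ n ih =>
    rcases Nat.eq_or_lt_of_le hr1 with h1 | h1
    · have hn0 : n = 0 := by omega
      subst hn0
      exact ⟨{c}, by simp, by simpa using hc, by simp⟩
    · have hn1 : 1 ≤ n := by omega
      have hq' : 2 * n ≤ Fintype.card F - 1 := by omega
      exact aux_step hodd n c hn1 (by omega) (ih hn1 hq')

end aux

/-- For odd `q` and `3 ≤ r ≤ q - 2`, and any `η ∈ 𝔽_q^*`, there is an `r`-subset of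
`𝔽_q^*` whose elements sum to `η⁻¹`. -/
theorem stmt_5 {F : Type*} [Field F] [Fintype F] [DecidableEq F]
    (hodd : Odd (Fintype.card F)) (r : ℕ) (hr3 : 3 ≤ r)
    (hr : r ≤ Fintype.card F - 2) (η : F) (hη : η ≠ 0) :
    ∃ s : Finset F, s.card = r ∧ (∀ x ∈ s, x ≠ 0) ∧ ∑ x ∈ s, x = η⁻¹ := by
  set q := Fintype.card F with hqdef
  have hq5 : 5 ≤ q := by omega
  have hc : (η⁻¹ : F) ≠ 0 := inv_ne_zero hη
  by_cases hcase : 2 * r ≤ q - 1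
  · exact aux_main hodd r η⁻¹ (by omega) hcase hc
  · -- complement argument
    have hrq : q + 1 ≤ 2 * r := by
      rcases hodd with ⟨k, hk⟩
      omega
    set r' := q - 1 - r with hr'
    have hr'1 : 1 ≤ r' := by omega
    have hr'q : 2 * r' ≤ q - 1 := by omega
    obtain ⟨s', hcard', hnz', hsum'⟩ :=
      aux_main hodd r' (-η⁻¹) hr'1 hr'q (neg_ne_zero.mpr hc)
    have hsub : s' ⊆ Finset.univ.erase 0 := by
      intro w hw
      exact Finset.mem_erase.mpr ⟨hnz' w hw, Finset.mem_univ w⟩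
    refine ⟨(Finset.univ.erase 0) \ s', ?_, ?_, ?_⟩
    · rw [Finset.card_sdiff_of_subset hsub, Finset.card_erase_of_mem (Finset.mem_univ 0),
        Finset.card_univ, hcard']
      omega
    · intro w hw
      exact (Finset.mem_erase.mp (Finset.mem_sdiff.mp hw).1).1
    · have htot : ∑ x ∈ Finset.univ.erase (0 : F), x = 0 := by
        have h' := Finset.add_sum_erase Finset.univ (fun w => w) (Finset.mem_univ (0 : F))
        have h0 := aux_sum_univ hodd
        linear_combination h' + h0
      have h2 : ∑ x ∈ (Finset.univ.erase 0) \ s', x + ∑ x ∈ s', x = 0 :=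
        (Finset.sum_sdiff (f := fun w => w) hsub).trans htot
      rw [hsum'] at h2
      linear_combination h2
end

section
/- Let q be odd, 3 ≤ r ≤ q−2, η ∈ 𝔽_q^*, and a₀, a₁ ∈ 𝔽_q^*. Set M = a₁ a₀^{−1}, a_j = a₁^j a₀^{−(j−1)} for 2 ≤ j ≤ r−1, and a_r = a₁^r a₀^{−(r−1)} − η a₁^{r+1} a₀^{−r}. For distinct x₁,…,x_r ∈ 𝔽_q^*, let c_j = (−1)^j e_j(x₁,…,x_r) (where e_j is the j-th elementary symmetric polynomial, so ∏_j(x − x_j) = Σ_{j=0}^r c_j x^{r−j}) and define Λ'₀ = 1, Λ'_i = −Σ_{j=1}^i c_j Λ'_{i−j}. Then Σ_{j=0}^{r−1} a_j c_{r−j} − η Σ_{j=0}^{r−1} a_j Σ_{max{0,j−1} ≤ w ≤ j} c_{r−w} Λ'_{1+w−j} + a_r = a₀ (1 − η Λ'₁ − η M) ∏_{j=1}^{r} (M − x_j). -/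
/-- The `k`-th elementary symmetric polynomial in `x₁, …, x_r`. -/
noncomputable def esymmF {F : Type*} [CommRing F] {r : ℕ} (x : Fin r → F) (k : ℕ) : F :=
  ∑ s ∈ Finset.powersetCard k (Finset.univ : Finset (Fin r)), ∏ i ∈ s, x i

/-- The sequence `Λ'` defined by `Λ'₀ = 1` and `Λ'_i = -∑_{j=1}^{i} c_j Λ'_{i-j}`. -/
noncomputable def Lam {F : Type*} [Field F] (c : ℕ → F) : ℕ → F
  | 0 => 1
  | (i + 1) => - ∑ j ∈ Finset.range (i + 1), c (j + 1) * Lam c (i - j)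
  decreasing_by exact Nat.lt_succ_of_le (Nat.sub_le i j)

open Polynomial in
lemma vietaQ {F : Type*} [Field F] {r : ℕ} (x : Fin r → F) (M : F) :
    ∏ j : Fin r, (M - x j) =
      ∑ k ∈ Finset.range (r + 1), (-1 : F) ^ k * esymmF x k * M ^ (r - k) := by
  have hcard : Multiset.card ((Finset.univ : Finset (Fin r)).val.map x) = r := by simp
  have h1 : ∏ j : Fin r, (M - x j)
      = Polynomial.eval M (∏ j : Fin r, (X - C (x j))) := by
    simp [Polynomial.eval_prod]
  have h2 : (∏ j : Fin r, (X - C (x j)))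
      = (((Finset.univ : Finset (Fin r)).val.map x).map fun t => X - C t).prod := by
    rw [Multiset.map_map]; rfl
  rw [h1, h2, Multiset.prod_X_sub_X_eq_sum_esymm, hcard]
  rw [Polynomial.eval_finset_sum]
  refine Finset.sum_congr rfl fun k hk => ?_
  rw [Finset.esymm_map_val]
  simp [esymmF, Polynomial.eval_finset_sum, Polynomial.eval_prod, mul_assoc]

/-- For odd `q`, `3 ≤ r ≤ q-2`, `η, a₀, a₁ ∈ 𝔽_q^*`, with `M = a₁a₀⁻¹`,
`a_j = a₁^j a₀^{-(j-1)}` for `2 ≤ j ≤ r-1`, `a_r = a₁^r a₀^{-(r-1)} - η a₁^{r+1} a₀^{-r}`,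
and `c_j = (-1)^j e_j(x₁,…,x_r)` for distinct nonzero `x₁,…,x_r`, one has
`∑ a_j c_{r-j} - η ∑_j a_j ∑_w c_{r-w} Λ'_{1+w-j} + a_r
  = a₀ (1 - ηΛ'₁ - ηM) ∏_j (M - x_j)`. -/
theorem stmt_6 {F : Type*} [Field F] [Fintype F]
    (hodd : Odd (Fintype.card F)) (r : ℕ) (hr3 : 3 ≤ r)
    (hr : r ≤ Fintype.card F - 2) (η a₀ a₁ : F)
    (hη : η ≠ 0) (ha₀ : a₀ ≠ 0) (ha₁ : a₁ ≠ 0)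
    (a : ℕ → F) (hA0 : a 0 = a₀) (hA1 : a 1 = a₁)
    (hAj : ∀ j, 2 ≤ j → j ≤ r - 1 → a j = a₁ ^ j * (a₀⁻¹) ^ (j - 1))
    (hAr : a r = a₁ ^ r * (a₀⁻¹) ^ (r - 1) - η * a₁ ^ (r + 1) * (a₀⁻¹) ^ r)
    (x : Fin r → F) (hinj : Function.Injective x) (hx0 : ∀ i, x i ≠ 0)
    (c : ℕ → F) (hc : ∀ j, c j = (-1 : F) ^ j * esymmF x j) :
    (∑ j ∈ Finset.range r, a j * c (r - j)) -
        η * ∑ j ∈ Finset.range r,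
          a j * ∑ w ∈ Finset.Icc (j - 1) j, c (r - w) * Lam c (1 + w - j) +
      a r =
      a₀ * (1 - η * Lam c 1 - η * (a₁ * a₀⁻¹)) * ∏ j : Fin r, (a₁ * a₀⁻¹ - x j) := by
  obtain ⟨m, rfl⟩ : ∃ m, r = m + 1 := ⟨r - 1, by omega⟩
  set M : F := a₁ * a₀⁻¹ with hM
  set Q : F := ∑ k ∈ Finset.range (m + 2), c (m + 1 - k) * M ^ k with hQdef
  have hc0 : c 0 = 1 := by simp [hc, esymmF]
  have hL1 : Lam c 1 = -(c 1) := by simp [Lam]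
  have hP : Q = ∏ j : Fin (m + 1), (M - x j) := by
    rw [vietaQ x M, hQdef, ← Finset.sum_range_reflect]
    refine Finset.sum_congr rfl fun k hk => ?_
    rw [Finset.mem_range, Nat.lt_succ_iff] at hk
    have h1 : m + 1 + 1 - 1 - k = m + 1 - k := by omega
    have h2 : m + 1 - (m + 1 - k) = k := by omega
    rw [h1, h2, hc]
  have hA : ∀ j < m + 1, a j = a₀ * M ^ j := by
    intro j hj
    match j with
    | 0 => simp [hA0]
    | 1 => rw [hA1, hM]; field_simp
    | (k + 2) =>
      rw [hAj (k + 2) (by omega) (by omega), hM, mul_pow]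
      rw [show k + 2 - 1 = k + 1 from rfl, pow_succ a₀⁻¹ (k + 1)]
      field_simp
  have hAr' : a (m + 1) = a₀ * M ^ (m + 1) - η * (a₀ * M ^ (m + 2)) := by
    rw [hAr, Nat.add_sub_cancel, hM, mul_pow, mul_pow, pow_succ a₀⁻¹ m,
      pow_succ a₀⁻¹ (m + 1)]
    field_simp
    linear_combination (η * a₁ ^ (m + 1 + 1) * (1 / a₀) ^ m) * (mul_one_div_cancel ha₀)
  have key1 : (∑ j ∈ Finset.range (m + 1), a j * c (m + 1 - j)) = a₀ * (Q - M ^ (m + 1)) := by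
    have e1 : ∀ j ∈ Finset.range (m + 1), a j * c (m + 1 - j)
        = a₀ * (c (m + 1 - j) * M ^ j) := fun j hj => by
      rw [hA j (Finset.mem_range.1 hj)]; ring
    rw [Finset.sum_congr rfl e1, ← Finset.mul_sum]
    have hQ1 : Q = (∑ j ∈ Finset.range (m + 1), c (m + 1 - j) * M ^ j)
        + c 0 * M ^ (m + 1) := by
      rw [hQdef, Finset.sum_range_succ, Nat.sub_self]
    rw [hQ1, hc0]; ring
  have hInner : ∀ j < m + 1,
      (∑ w ∈ Finset.Icc (j - 1) j, c (m + 1 - w) * Lam c (1 + w - j))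
        = c (m + 1 - j) * Lam c 1 + (if j = 0 then 0 else c (m + 1 - j + 1)) := by
    intro j hj
    match j with
    | 0 => simp
    | (k + 1) =>
      rw [Nat.add_sub_cancel, Finset.sum_Icc_succ_top (Nat.le_succ k),
        Finset.Icc_self, Finset.sum_singleton]
      have h1 : 1 + k - (k + 1) = 0 := by omega
      have h2 : 1 + (k + 1) - (k + 1) = 1 := by omega
      have h3 : m + 1 - (k + 1) + 1 = m + 1 - k := by omega
      rw [h1, h2, h3, if_neg (Nat.succ_ne_zero k)]
      have h0 : Lam c 0 = 1 := by simp [Lam]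
      rw [h0]
      ring
  have key2 : (∑ j ∈ Finset.range (m + 1),
        a j * ∑ w ∈ Finset.Icc (j - 1) j, c (m + 1 - w) * Lam c (1 + w - j))
      = Lam c 1 * (a₀ * (Q - M ^ (m + 1))) + a₀ * M * (Q - c 1 * M ^ m - M ^ (m + 1)) := by
    have e1 : ∀ j ∈ Finset.range (m + 1),
        a j * ∑ w ∈ Finset.Icc (j - 1) j, c (m + 1 - w) * Lam c (1 + w - j)
          = Lam c 1 * (a j * c (m + 1 - j))
            + (if j = 0 then 0 else a₀ * M ^ j * c (m + 1 - j + 1)) := by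
      intro j hj
      rw [hInner j (Finset.mem_range.1 hj)]
      by_cases h0 : j = 0
      · simp [h0]; ring
      · rw [if_neg h0, if_neg h0, hA j (Finset.mem_range.1 hj)]; ring
    rw [Finset.sum_congr rfl e1, Finset.sum_add_distrib, ← Finset.mul_sum, key1]
    congr 1
    rw [Finset.sum_range_succ']
    rw [if_pos rfl, add_zero]
    have e2 : ∀ i ∈ Finset.range m,
        (if i + 1 = 0 then (0:F) else a₀ * M ^ (i + 1) * c (m + 1 - (i + 1) + 1))
        = a₀ * M * (c (m + 1 - i) * M ^ i) := by
      intro i hi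
      rw [if_neg (Nat.succ_ne_zero i)]
      have : m + 1 - (i + 1) + 1 = m + 1 - i := by
        have := Finset.mem_range.1 hi; omega
      rw [this]; ring
    rw [Finset.sum_congr rfl e2, ← Finset.mul_sum]
    congr 1
    have hQ2 : Q = (∑ i ∈ Finset.range m, c (m + 1 - i) * M ^ i)
        + c 1 * M ^ m + c 0 * M ^ (m + 1) := by
      rw [hQdef, Finset.sum_range_succ, Finset.sum_range_succ, Nat.sub_self,
        Nat.add_sub_cancel_left]
    rw [hQ2, hc0]; ring
  rw [key1, key2, hAr', ← hP, hL1]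
  ring
end

section
/- Let q be odd and 1 ≤ j ≤ i−1 ≤ q−5. Then there exists a subset {x₁,…,x_i} ⊆ 𝔽_q^* of i pairwise distinct nonzero elements such that S_{j,i} ≠ 0 and S_{1,i}·S_{j,i} − S_{j+1,i} ≠ 0, where S_{ℓ,i} denotes the ℓ-th elementary symmetric polynomial in x₁,…,x_i. -/
lemma esymmF_zero {F : Type*} [CommRing F] {r : ℕ} (x : Fin r → F) :
    esymmF x 0 = 1 := by
  simp [esymmF]

lemma last_not_mem_map {r : ℕ} (s : Finset (Fin r)) :
    Fin.last r ∉ s.map Fin.castSuccEmb := by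
  intro h
  obtain ⟨a, -, ha⟩ := Finset.mem_map.mp h
  have := congrArg Fin.val ha
  simp [Fin.castSuccEmb] at this
  exact absurd this (Nat.ne_of_lt a.isLt)

lemma esymmF_snoc {F : Type*} [CommRing F] {r : ℕ} (x : Fin r → F) (t : F) (k : ℕ) :
    esymmF (Fin.snoc x t) (k + 1) = esymmF x (k + 1) + t * esymmF x k := by
  classical
  unfold esymmF
  rw [Fin.univ_castSuccEmb, Finset.cons_eq_insert,
    Finset.powersetCard_succ_insert (last_not_mem_map _)]
  rw [Finset.sum_union]
  · congr 1
    · rw [Finset.powersetCard_map, Finset.sum_map]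
      refine Finset.sum_congr rfl fun s _ => ?_
      simp only [RelEmbedding.coe_toEmbedding, Finset.mapEmbedding_apply]
      rw [Finset.prod_map]
      exact Finset.prod_congr rfl fun a _ => Fin.snoc_castSucc ..
    · rw [Finset.sum_image]
      · rw [Finset.powersetCard_map, Finset.sum_map, Finset.mul_sum]
        refine Finset.sum_congr rfl fun s hs => ?_
        simp only [RelEmbedding.coe_toEmbedding, Finset.mapEmbedding_apply]
        rw [Finset.prod_insert (last_not_mem_map _), Fin.snoc_last, Finset.prod_map]
        congr 1
        exact Finset.prod_congr rfl fun a _ => Fin.snoc_castSucc ..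
      · intro s hs s' hs' h
        have hls : Fin.last r ∉ s := fun h' =>
          last_not_mem_map _ ((Finset.mem_powersetCard.mp hs).1 h')
        have hls' : Fin.last r ∉ s' := fun h' =>
          last_not_mem_map _ ((Finset.mem_powersetCard.mp hs').1 h')
        rwa [Finset.insert_erase_invOn.2.injOn.eq_iff] at h <;> simp [hls, hls']
  · rw [Finset.disjoint_left]
    intro s hs hs'
    have h1 : Fin.last r ∉ s := fun h' =>
      last_not_mem_map _ ((Finset.mem_powersetCard.mp hs).1 h')
    simp only [Finset.mem_image] at hs'
    obtain ⟨u, hu, rfl⟩ := hs'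
    exact h1 (Finset.mem_insert_self _ _)

lemma snoc_injective {F : Type*} {r : ℕ} {x : Fin r → F} {t : F}
    (hx : Function.Injective x) (ht : ∀ s, x s ≠ t) :
    Function.Injective (Fin.snoc x t : Fin (r + 1) → F) := by
  intro a b hab
  rcases Fin.eq_castSucc_or_eq_last a with ⟨a', rfl⟩ | rfl <;>
    rcases Fin.eq_castSucc_or_eq_last b with ⟨b', rfl⟩ | rfl <;>
    simp only [Fin.snoc_castSucc, Fin.snoc_last] at hab
  · exact congrArg _ (hx hab)
  · exact absurd hab (ht a')
  · exact absurd hab.symm (ht b')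
  · rfl

lemma exists_not_mem_of_card_lt {F : Type*} [Fintype F] [DecidableEq F] {B : Finset F}
    (h : B.card < Fintype.card F) : ∃ t : F, t ∉ B := by
  by_contra hc
  push_neg at hc
  have : (Finset.univ : Finset F) ⊆ B := fun a _ => hc a
  have := Finset.card_le_card this
  rw [Finset.card_univ] at this
  omega

lemma exists_esymm_ne {F : Type*} [Field F] [Fintype F] :
    ∀ r m : ℕ, m ≤ r → r + 2 ≤ Fintype.card F →
      ∃ x : Fin r → F, Function.Injective x ∧ (∀ t, x t ≠ 0) ∧ esymmF x m ≠ 0 := by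
  classical
  intro r
  induction r with
  | zero =>
    intro m hm _
    interval_cases m
    exact ⟨Fin.elim0, fun a => a.elim0, fun a => a.elim0, by
      rw [esymmF_zero]; exact one_ne_zero⟩
  | succ r ih =>
    intro m hm hcard
    match m with
    | 0 =>
      obtain ⟨x, hinj, hnz, -⟩ := ih 0 (Nat.zero_le _) (by omega)
      have hB : (insert (0 : F) (Finset.image x Finset.univ)).card < Fintype.card F := by
        have h1 := Finset.card_insert_le (0 : F) (Finset.image x Finset.univ)
        have h2 := Finset.card_image_le (s := (Finset.univ : Finset (Fin r))) (f := x)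
        simp only [Finset.card_univ, Fintype.card_fin] at h2
        omega
      obtain ⟨t, ht⟩ := exists_not_mem_of_card_lt hB
      simp only [Finset.mem_insert, Finset.mem_image, Finset.mem_univ, true_and, not_or,
        not_exists] at ht
      refine ⟨Fin.snoc x t, snoc_injective hinj ht.2, ?_, by
        rw [esymmF_zero]; exact one_ne_zero⟩
      intro s
      rcases Fin.eq_castSucc_or_eq_last s with ⟨s', rfl⟩ | rfl
      · simpa using hnz s'
      · simpa using ht.1
    | m + 1 =>
      obtain ⟨x, hinj, hnz, hB0⟩ := ih m (by omega) (by omega)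
      set A := esymmF x (m + 1) with hA
      set B := esymmF x m with hBdef
      have hB : (insert (0 : F) (insert (-A * B⁻¹) (Finset.image x Finset.univ))).card
          < Fintype.card F := by
        have h1 := Finset.card_insert_le (0 : F) (insert (-A * B⁻¹) (Finset.image x Finset.univ))
        have h1' := Finset.card_insert_le (-A * B⁻¹) (Finset.image x Finset.univ)
        have h2 := Finset.card_image_le (s := (Finset.univ : Finset (Fin r))) (f := x)
        simp only [Finset.card_univ, Fintype.card_fin] at h2
        omega
      obtain ⟨t, ht⟩ := exists_not_mem_of_card_lt hB
      simp only [Finset.mem_insert, Finset.mem_image, Finset.mem_univ, true_and, not_or,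
        not_exists] at ht
      refine ⟨Fin.snoc x t, snoc_injective hinj (fun s h => ht.2.2 s h), ?_, ?_⟩
      · intro s
        rcases Fin.eq_castSucc_or_eq_last s with ⟨s', rfl⟩ | rfl
        · simpa using hnz s'
        · simpa using ht.1
      · rw [esymmF_snoc, ← hA, ← hBdef]
        intro hc
        apply ht.2.1
        field_simp
        linear_combination hc

/-- For odd `q` and `1 ≤ j ≤ i - 1 ≤ q - 5`, there exist pairwise distinct nonzero
`x₁, …, x_i ∈ 𝔽_q^*` with `S_{j,i} ≠ 0` and `S_{1,i} S_{j,i} - S_{j+1,i} ≠ 0`. -/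
theorem stmt_8 {F : Type*} [Field F] [Fintype F]
    (hodd : Odd (Fintype.card F)) (i j : ℕ)
    (hj1 : 1 ≤ j) (hji : j + 1 ≤ i) (hi : i + 4 ≤ Fintype.card F) :
    ∃ x : Fin i → F, Function.Injective x ∧ (∀ t, x t ≠ 0) ∧
      esymmF x j ≠ 0 ∧ esymmF x 1 * esymmF x j - esymmF x (j + 1) ≠ 0 := by
  classical
  obtain ⟨n, rfl⟩ : ∃ n, i = n + 1 := ⟨i - 1, by omega⟩
  obtain ⟨m, rfl⟩ : ∃ m, j = m + 1 := ⟨j - 1, by omega⟩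
  obtain ⟨x, hinj, hnz, hB0⟩ := exists_esymm_ne (F := F) n m (by omega) (by omega)
  set A := esymmF x (m + 1) with hA
  set B := esymmF x m with hBdef
  set S := esymmF x 1 with hS
  set Cc := esymmF x (m + 2) with hCc
  set p : Polynomial F := Polynomial.C B * Polynomial.X ^ 2
      + Polynomial.C (S * B) * Polynomial.X + Polynomial.C (S * A - Cc) with hp
  have hpne : p ≠ 0 := by
    intro h
    have h2 : p.coeff 2 = 0 := by rw [h]; simp
    rw [hp] at h2
    simp [Polynomial.coeff_C] at h2
    exact hB0 h2
  have hdeg : p.natDegree ≤ 2 := by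
    rw [hp]; compute_degree
  have hroots : p.roots.toFinset.card ≤ 2 :=
    le_trans (Multiset.toFinset_card_le _) (le_trans (Polynomial.card_roots' p) hdeg)
  have hBcard : (insert (0 : F) (insert (-A * B⁻¹)
      (Finset.image x Finset.univ ∪ p.roots.toFinset))).card < Fintype.card F := by
    have h1 := Finset.card_insert_le (0 : F)
      (insert (-A * B⁻¹) (Finset.image x Finset.univ ∪ p.roots.toFinset))
    have h1' := Finset.card_insert_le (-A * B⁻¹)
      (Finset.image x Finset.univ ∪ p.roots.toFinset)
    have h1'' := Finset.card_union_le (Finset.image x Finset.univ) p.roots.toFinset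
    have h2 := Finset.card_image_le (s := (Finset.univ : Finset (Fin n))) (f := x)
    simp only [Finset.card_univ, Fintype.card_fin] at h2
    omega
  obtain ⟨t, ht⟩ := exists_not_mem_of_card_lt hBcard
  simp only [Finset.mem_insert, Finset.mem_union, Finset.mem_image, Finset.mem_univ,
    true_and, not_or, not_exists] at ht
  obtain ⟨ht0, htAB, htx, htr⟩ := ht
  refine ⟨Fin.snoc x t, snoc_injective hinj (fun s h => htx s h), ?_, ?_, ?_⟩
  · intro s
    rcases Fin.eq_castSucc_or_eq_last s with ⟨s', rfl⟩ | rfl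
    · simpa using hnz s'
    · simpa using ht0
  · rw [esymmF_snoc, ← hA, ← hBdef]
    intro hc
    apply htAB
    field_simp
    linear_combination hc
  · rw [esymmF_snoc, esymmF_snoc, show m + 1 + 1 = m + 2 from rfl, esymmF_snoc,
      esymmF_zero, ← hA, ← hBdef, ← hS, ← hCc]
    intro hc
    apply htr
    rw [Multiset.mem_toFinset, Polynomial.mem_roots hpne]
    rw [Polynomial.IsRoot, hp]
    simp only [Polynomial.eval_add, Polynomial.eval_mul, Polynomial.eval_C,
      Polynomial.eval_pow, Polynomial.eval_X]
    linear_combination hc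
end

section
/- Let q = 2^m and η, h ∈ 𝔽_q^*. Then the number N of solutions (X,Y) ∈ 𝔽_q² of η·X·Y·(X+Y) + h = 0 satisfies |N − (q−2)| ≤ 2√q. -/
open Finset

set_option linter.unusedSectionVars false
set_option maxHeartbeats 1000000



section Prelim
variable {F : Type*} [Field F] [Fintype F] [CharP F 2]

private lemma AS_zero : ∀ t : F, t ^ 2 + t = 0 ↔ t = 0 ∨ t = 1 := by
  intro t
  have : t ^ 2 + t = t * (t + 1) := by ring
  rw [this, mul_eq_zero]
  constructor
  · rintro (h | h)
    · exact Or.inl h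
    · right
      have h2 := CharTwo.two_eq_zero (R := F)
      linear_combination h - h2
  · rintro (rfl | rfl) <;> simp [CharTwo.add_self_eq_zero]

private lemma card_AS_zero : Nat.card {t : F // t ^ 2 + t = 0} = 2 := by
  rw [Nat.card_congr (Equiv.subtypeEquivRight AS_zero)]
  have : {t : F | t = 0 ∨ t = 1} = ({0, 1} : Set F) := by
    ext t; simp [Set.mem_insert_iff]
  rw [show {t : F // t = 0 ∨ t = 1} = ↥({0,1} : Set F) from by rw [← this]; rfl]
  rw [Nat.card_coe_set_eq, Set.ncard_pair (zero_ne_one)]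

private lemma card_AS (x : F) (hx : ∃ t : F, t ^ 2 + t = x) :
    Nat.card {t : F // t ^ 2 + t = x} = 2 := by
  obtain ⟨t₀, ht₀⟩ := hx
  have e : {t : F // t ^ 2 + t = x} ≃ {t : F // t ^ 2 + t = 0} := by
    refine ⟨fun t => ⟨t.1 + t₀, ?_⟩, fun s => ⟨s.1 + t₀, ?_⟩, ?_, ?_⟩
    · have := t.2
      rw [CharTwo.add_sq]
      linear_combination this + ht₀ + CharTwo.two_eq_zero (R := F) * x
    · have := s.2
      rw [CharTwo.add_sq]
      linear_combination this + ht₀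
    · intro t; ext; simp [add_assoc, CharTwo.add_self_eq_zero]
    · intro s; ext; simp [add_assoc, CharTwo.add_self_eq_zero]
  rw [Nat.card_congr e, card_AS_zero]

end Prelim


section Psi
variable {F : Type*} [Field F] [Fintype F] [CharP F 2]

private def ASHom : F →+ F :=
  AddMonoidHom.mk' (fun t => t ^ 2 + t) (by
    intro a b
    show (a + b) ^ 2 + (a + b) = a ^ 2 + a + (b ^ 2 + b)
    rw [CharTwo.add_sq]
    ring)

private lemma exists_psi :
    ∃ ψ : AddChar F ℂ, ψ ≠ 1 ∧
      ∀ x : F, (Nat.card {t : F // t ^ 2 + t = x} : ℂ) = 1 + ψ x := by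
  classical
  set H : AddSubgroup F := (ASHom (F := F)).range with hH
  have hmem : ∀ x : F, x ∈ H ↔ ∃ t : F, t ^ 2 + t = x := by
    intro x; constructor
    · rintro ⟨t, rfl⟩; exact ⟨t, rfl⟩
    · rintro ⟨t, rfl⟩; exact ⟨t, rfl⟩
  -- cardinality of H
  have hkercard : Nat.card (ASHom (F := F)).ker = 2 := by
    have e : (ASHom (F := F)).ker ≃ {t : F // t ^ 2 + t = 0} :=
      Equiv.subtypeEquivRight (fun t => Iff.rfl)
    rw [Nat.card_congr e, card_AS_zero]
  have hcardF : Nat.card F = Nat.card (F ⧸ (ASHom (F := F)).ker) * 2 := by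
    rw [← hkercard]
    exact AddSubgroup.card_eq_card_quotient_mul_card_addSubgroup _
  have hrange : Nat.card H * 2 = Nat.card F := by
    rw [hcardF, ← Nat.card_congr (QuotientAddGroup.quotientKerEquivRange (ASHom (F := F))).toEquiv]
  have hqpos : 0 < Nat.card F := Nat.card_pos
  -- index 2
  have hquot : Nat.card (F ⧸ H) = 2 := by
    have h2 : Nat.card F = Nat.card (F ⧸ H) * Nat.card H :=
      AddSubgroup.card_eq_card_quotient_mul_card_addSubgroup _
    have hHpos : 0 < Nat.card H := Nat.card_pos
    nlinarith [hrange, h2]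
  -- key: sums of two non-members are members
  have keyP : ∀ x y : F, x ∉ H → y ∉ H → x + y ∈ H := by
    intro x y hx hy
    have hxq : (QuotientAddGroup.mk x : F ⧸ H) = QuotientAddGroup.mk y := by
      by_contra hne
      have hx0 : (QuotientAddGroup.mk x : F ⧸ H) ≠ 0 := by
        simpa [QuotientAddGroup.eq_zero_iff] using hx
      have hy0 : (QuotientAddGroup.mk y : F ⧸ H) ≠ 0 := by
        simpa [QuotientAddGroup.eq_zero_iff] using hy
      have : 3 ≤ Nat.card (F ⧸ H) := by
        have : ({0, QuotientAddGroup.mk x, QuotientAddGroup.mk y} : Finset (F ⧸ H)).card = 3 := by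
          rw [Finset.card_insert_of_notMem (by simp [hx0.symm, hy0.symm]),
            Finset.card_insert_of_notMem (by simp [hne]), Finset.card_singleton]
        calc 3 = ({0, QuotientAddGroup.mk x, QuotientAddGroup.mk y} : Finset (F ⧸ H)).card :=
              this.symm
          _ ≤ Fintype.card (F ⧸ H) := Finset.card_le_univ _
          _ = Nat.card (F ⧸ H) := (Nat.card_eq_fintype_card).symm
      omega
    have h' : -x + y ∈ H := by rwa [QuotientAddGroup.eq] at hxq
    simpa [CharTwo.neg_eq] using h'
  -- define psi
  refine ⟨AddChar.mk (fun x => if x ∈ H then (1 : ℂ) else -1) (by simp [H.zero_mem]) ?_, ?_, ?_⟩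
  · intro x y
    by_cases hx : x ∈ H <;> by_cases hy : y ∈ H
    · simp [hx, hy, H.add_mem hx hy]
    · have : x + y ∉ H := fun hxy => hy (by simpa using H.add_mem (H.neg_mem hx) hxy)
      simp [hx, hy, this]
    · have : x + y ∉ H := fun hxy => hx (by simpa [add_comm] using H.add_mem (H.neg_mem hy) hxy)
      simp [hx, hy, this]
    · simp [hx, hy, keyP x y hx hy]
  · -- nontrivial
    intro heq
    have hall : ∀ x : F, x ∈ H := by
      intro x
      by_contra hx
      have := congrArg (fun ψ : AddChar F ℂ => ψ x) heq
      simp only [AddChar.one_apply] at this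
      change (if x ∈ H then (1:ℂ) else -1) = 1 at this
      rw [if_neg hx] at this
      norm_num at this
    have : H = ⊤ := by ext x; simp [hall x]
    rw [this] at hrange
    have : Nat.card (⊤ : AddSubgroup F) = Nat.card F := by
      rw [← AddSubgroup.card_top (G := F)]
    omega
  · intro x
    by_cases hx : x ∈ H
    · have : (Nat.card {t : F // t ^ 2 + t = x} : ℂ) = 2 := by
        rw [card_AS x ((hmem x).mp hx)]; norm_num
      rw [this]
      change (2 : ℂ) = 1 + if x ∈ H then (1:ℂ) else -1
      rw [if_pos hx]; norm_num
    · have hempty : IsEmpty {t : F // t ^ 2 + t = x} := by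
        refine ⟨fun t => hx ((hmem x).mpr ⟨t.1, t.2⟩)⟩
      have : Nat.card {t : F // t ^ 2 + t = x} = 0 := by
        rw [Nat.card_eq_zero]; exact Or.inl hempty
      rw [this, Nat.cast_zero]
      change (0 : ℂ) = 1 + if x ∈ H then (1:ℂ) else -1
      rw [if_neg hx]; norm_num

end Psi


section Gauss
variable {F : Type*} [Field F] [Fintype F] [DecidableEq F]

private lemma abs_mulChar_eq_one (χ : MulChar F ℂ) {x : F} (hx : x ≠ 0) : ‖χ x‖ = 1 := by
  apply Complex.norm_eq_one_of_pow_eq_one (n := Fintype.card F - 1)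
  · rw [← map_pow, FiniteField.pow_card_sub_one_eq_one x hx, map_one]
  · have : 1 < Fintype.card F := Fintype.one_lt_card
    omega

private lemma abs_addChar_eq_one (ψ : AddChar F ℂ) (x : F) : ‖ψ x‖ = 1 := by
  apply Complex.norm_eq_one_of_pow_eq_one (n := Fintype.card F)
  · rw [← AddChar.map_nsmul_eq_pow, card_nsmul_eq_zero, AddChar.map_zero_eq_one]
  · exact Fintype.card_ne_zero

private lemma conj_gaussSum (χ : MulChar F ℂ) (ψ : AddChar F ℂ) :
    (starRingEnd ℂ) (gaussSum χ ψ) = gaussSum χ⁻¹ ψ⁻¹ := by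
  rw [gaussSum, gaussSum, map_sum]
  refine Finset.sum_congr rfl fun a _ => ?_
  rw [map_mul]
  congr 1
  · by_cases ha : a = 0
    · subst ha
      rw [MulChar.map_nonunit χ not_isUnit_zero, MulChar.map_nonunit χ⁻¹ not_isUnit_zero, map_zero]
    · rw [MulChar.inv_apply_eq_inv', ← Complex.inv_eq_conj (abs_mulChar_eq_one χ ha)]
  · rw [AddChar.inv_apply', ← Complex.inv_eq_conj (abs_addChar_eq_one ψ a)]

private lemma gauss_abs {χ : MulChar F ℂ} (hχ : χ ≠ 1) {ψ : AddChar F ℂ} (hψ : ψ ≠ 1) :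
    ‖gaussSum χ ψ‖ = Real.sqrt (Fintype.card F) := by
  have key : gaussSum χ ψ * (starRingEnd ℂ) (gaussSum χ ψ) = (Fintype.card F : ℂ) := by
    rw [conj_gaussSum]
    exact gaussSum_mul_gaussSum_eq_card hχ (AddChar.IsPrimitive.of_ne_one hψ)
  rw [Complex.mul_conj] at key
  have : Complex.normSq (gaussSum χ ψ) = (Fintype.card F : ℝ) := by exact_mod_cast key
  rw [Complex.norm_def, this]

private lemma sum_eq_zero_add_units (f : F → ℂ) : ∑ x : F, f x = f 0 + ∑ u : Fˣ, f u := by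
  classical
  rw [← Finset.add_sum_erase _ f (Finset.mem_univ 0)]
  congr 1
  have h1 : ∑ u : Fˣ, f ↑u = ∑ x : {x : F // x ≠ 0}, f ↑x :=
    Fintype.sum_equiv (unitsEquivNeZero (G₀ := F)) _ _ (fun u => by simp [unitsEquivNeZero])
  rw [h1, ← Finset.sum_subtype (Finset.univ.erase 0) (fun x => by simp) f]

end Gauss


section Cubes
variable {F : Type*} [Field F] [Fintype F] [DecidableEq F]

private lemma chi_cube_eq_one {χ : MulChar F ℂ} (hχ : orderOf χ = 3) (x : F) (hx : x ≠ 0) :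
    χ x ^ 3 = 1 := by
  have h1 : (χ ^ 3) x = χ x ^ 3 := MulChar.pow_apply' χ (by norm_num) x
  rw [← h1, ← hχ, pow_orderOf_eq_one χ]
  have h2 : x = ((Ne.isUnit hx).unit : Fˣ) := ((Ne.isUnit hx).unit_spec).symm
  rw [h2, MulChar.one_apply_coe]

private lemma chi_eq_one_of_cube {χ : MulChar F ℂ} (hχ : orderOf χ = 3) (v : Fˣ) :
    χ ↑(v ^ 3) = 1 := by
  have : χ ↑(v ^ 3) = χ ↑v ^ 3 := by
    rw [Units.val_pow_eq_pow_val, map_pow]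
  rw [this, chi_cube_eq_one hχ _ (Units.ne_zero v)]

private lemma cube_of_chi_eq_one {χ : MulChar F ℂ} (hχ : orderOf χ = 3) {w : Fˣ}
    (hw : χ ↑w = 1) : ∃ v : Fˣ, v ^ 3 = w := by
  obtain ⟨g, hg⟩ := IsCyclic.exists_generator (α := Fˣ)
  have e0cube : χ ↑g ^ 3 = 1 := chi_cube_eq_one hχ _ (Units.ne_zero g)
  have e0ne : χ ↑g ≠ 1 := by
    intro he
    have hone : χ = 1 := by
      apply MulChar.ext
      intro a
      obtain ⟨k, hk⟩ := Submonoid.mem_powers_iff a g |>.mp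
        ((mem_powers_iff_mem_zpowers).mpr (hg a))
      rw [← hk, MulChar.one_apply_coe, Units.val_pow_eq_pow_val, map_pow, he, one_pow]
    rw [hone, orderOf_one] at hχ
    norm_num at hχ
  have : Fact (Nat.Prime 3) := ⟨by norm_num⟩
  have horder : orderOf (χ ↑g) = 3 := orderOf_eq_prime e0cube e0ne
  obtain ⟨k, hk⟩ := Submonoid.mem_powers_iff w g |>.mp
    ((mem_powers_iff_mem_zpowers).mpr (hg w))
  have h3k : 3 ∣ k := by
    rw [← horder]
    rw [orderOf_dvd_iff_pow_eq_one]
    rw [← map_pow, ← Units.val_pow_eq_pow_val, hk, hw]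
  obtain ⟨k', rfl⟩ := h3k
  exact ⟨g ^ k', by rw [← hk, ← pow_mul, mul_comm]⟩

private lemma card_cube_roots_one (h3 : 3 ∣ Fintype.card F - 1) :
    (univ.filter fun u : Fˣ => u ^ 3 = 1).card = 3 := by
  obtain ⟨d, hd⟩ := h3
  obtain ⟨g, hg⟩ := IsCyclic.exists_generator (α := Fˣ)
  have horderg : orderOf g = Fintype.card F - 1 := by
    rw [orderOf_eq_card_of_forall_mem_zpowers hg, Nat.card_eq_fintype_card, Fintype.card_units]
  have hd0 : d ≠ 0 := by
    intro h
    rw [h, mul_zero] at hd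
    have : 1 < Fintype.card F := Fintype.one_lt_card
    omega
  set ζ := g ^ d with hζ
  have hordζ : orderOf ζ = 3 := by
    have hdc : 3 * d / d = 3 := Nat.mul_div_cancel 3 (Nat.pos_of_ne_zero hd0)
    rw [hζ, orderOf_pow, horderg, hd, Nat.gcd_eq_right ⟨3, by ring⟩, hdc]
  have hζ3 : ζ ^ 3 = 1 := by rw [← hordζ]; exact pow_orderOf_eq_one ζ
  refine le_antisymm (IsCyclic.card_pow_eq_one_le (by norm_num)) ?_
  have hsub : ({1, ζ, ζ ^ 2} : Finset Fˣ) ⊆ univ.filter fun u : Fˣ => u ^ 3 = 1 := by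
    intro u hu
    simp only [Finset.mem_insert, Finset.mem_singleton] at hu
    simp only [Finset.mem_filter, Finset.mem_univ, true_and]
    rcases hu with rfl | rfl | rfl
    · rw [one_pow]
    · exact hζ3
    · rw [← pow_mul, mul_comm, pow_mul, hζ3, one_pow]
  have hcard : ({1, ζ, ζ ^ 2} : Finset Fˣ).card = 3 := by
    have h1 : ζ ≠ 1 := by
      intro h; rw [h, orderOf_one] at hordζ; norm_num at hordζ
    have h2 : ζ ^ 2 ≠ 1 := by
      intro h
      have := orderOf_dvd_of_pow_eq_one h
      rw [hordζ] at this
      omega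
    have h12 : ζ ≠ ζ ^ 2 := by
      intro h
      apply h1
      have hm : ζ * 1 = ζ * ζ := by rw [mul_one, ← sq]; exact h
      exact (mul_left_cancel hm).symm
    rw [Finset.card_insert_of_notMem (by simp [h1.symm, h2.symm]),
      Finset.card_insert_of_notMem (by simp [h12]), Finset.card_singleton]
  calc 3 = ({1, ζ, ζ ^ 2} : Finset Fˣ).card := hcard.symm
    _ ≤ _ := Finset.card_le_card hsub

private lemma card_cube_fiber (h3 : 3 ∣ Fintype.card F - 1) {χ : MulChar F ℂ}
    (hχ : orderOf χ = 3) (w : Fˣ) :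
    ((univ.filter fun u : Fˣ => u ^ 3 = w).card : ℂ) = 1 + χ ↑w + χ ↑w ^ 2 := by
  by_cases hw : ∃ v : Fˣ, v ^ 3 = w
  · obtain ⟨v, rfl⟩ := hw
    have hcard : (univ.filter fun u : Fˣ => u ^ 3 = v ^ 3).card
        = (univ.filter fun u : Fˣ => u ^ 3 = 1).card := by
      apply Finset.card_bij (fun u _ => u * v⁻¹)
      · intro u hu
        simp only [Finset.mem_filter, Finset.mem_univ, true_and] at hu ⊢
        rw [mul_pow, hu, inv_pow, mul_inv_eq_one]
      · intro a ha b hb hab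
        exact mul_right_cancel hab
      · intro b hb
        simp only [Finset.mem_filter, Finset.mem_univ, true_and] at hb ⊢
        exact ⟨b * v, by rw [mul_pow, hb, one_mul], by rw [mul_inv_cancel_right]⟩
    rw [hcard, card_cube_roots_one h3, chi_eq_one_of_cube hχ v]
    norm_num
  · have hempty : (univ.filter fun u : Fˣ => u ^ 3 = w) = ∅ := by
      rw [Finset.filter_eq_empty_iff]
      intro u _
      exact fun h => hw ⟨u, h⟩
    rw [hempty]
    have hne : χ ↑w ≠ 1 := fun h => hw (cube_of_chi_eq_one hχ h)
    have hcube : χ ↑w ^ 3 = 1 := chi_cube_eq_one hχ _ (Units.ne_zero w)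
    have hfact : (χ ↑w - 1) * (1 + χ ↑w + χ ↑w ^ 2) = 0 := by
      linear_combination hcube
    rcases mul_eq_zero.mp hfact with h | h
    · exact absurd (by linear_combination h) hne
    · simp [h.symm]

end Cubes


section SBound
variable {F : Type*} [Field F] [Fintype F] [DecidableEq F] [CharP F 2]

private lemma mulcube_bijective (h3 : ¬ 3 ∣ Fintype.card F - 1) {c : F} (hc : c ≠ 0) :
    Function.Bijective (fun Z : F => c * Z ^ 3) := by
  have hcop : (Nat.card Fˣ).Coprime 3 := by
    rw [Nat.card_eq_fintype_card, Fintype.card_units, Nat.coprime_comm]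
    exact (Nat.Prime.coprime_iff_not_dvd (by norm_num)).mpr h3
  have hinj : Function.Injective (fun Z : F => Z ^ 3) := by
    intro a b hab
    simp only at hab
    rcases eq_or_ne a 0 with rfl | ha
    · rw [zero_pow (by norm_num : (3:ℕ) ≠ 0)] at hab
      exact (pow_eq_zero_iff (n := 3) (by norm_num) |>.mp hab.symm).symm
    · rcases eq_or_ne b 0 with rfl | hb
      · rw [zero_pow (by norm_num : (3:ℕ) ≠ 0)] at hab
        exact (ha (pow_eq_zero_iff (n := 3) (by norm_num) |>.mp hab)).elim
      · have hu : (Ne.isUnit ha).unit ^ 3 = (Ne.isUnit hb).unit ^ 3 := by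
          ext
          rw [Units.val_pow_eq_pow_val, Units.val_pow_eq_pow_val,
            (Ne.isUnit ha).unit_spec, (Ne.isUnit hb).unit_spec]
          exact hab
        have := (powCoprime hcop).injective (by simpa [powCoprime] using hu)
        calc a = ((Ne.isUnit ha).unit : F) := ((Ne.isUnit ha).unit_spec).symm
          _ = ((Ne.isUnit hb).unit : F) := by rw [this]
          _ = b := (Ne.isUnit hb).unit_spec
  have heq : (fun Z : F => c * Z ^ 3) = (fun x : F => c * x) ∘ (fun Z : F => Z ^ 3) := rfl
  rw [heq]
  exact ((Equiv.mulLeft₀ c hc).bijective).comp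
    (Finite.injective_iff_bijective.mp hinj)

private lemma sum_psi_mul (ψ : AddChar F ℂ) (hψ : ψ ≠ 1) {c : F} (hc : c ≠ 0) :
    ∑ x : F, ψ (c * x) = 0 := by
  rw [Fintype.sum_bijective (fun x : F => c * x)
    ((Equiv.mulLeft₀ c hc).bijective) _ (fun y => ψ y) (fun x => rfl)]
  exact AddChar.sum_eq_zero_of_ne_one hψ

private lemma abs_S_le (ψ : AddChar F ℂ) (hψ : ψ ≠ 1) {c : F} (hc : c ≠ 0) :
    ‖∑ Z : F, ψ (c * Z ^ 3)‖ ≤ 2 * Real.sqrt (Fintype.card F) := by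
  by_cases h3 : 3 ∣ Fintype.card F - 1
  · -- cubic character case
    obtain ⟨χ, hχ⟩ := MulChar.exists_mulChar_orderOf F h3
      (Complex.isPrimitiveRoot_exp 3 (by norm_num))
    have hχ1 : χ ≠ 1 := by
      intro h; rw [h, orderOf_one] at hχ; norm_num at hχ
    have hχ21 : χ ^ 2 ≠ 1 := by
      intro h
      have := orderOf_dvd_of_pow_eq_one h
      rw [hχ] at this
      omega
    set T1 := gaussSum χ (ψ.mulShift c) with hT1
    set T2 := gaussSum (χ ^ 2) (ψ.mulShift c) with hT2
    have key : ∑ Z : F, ψ (c * Z ^ 3) = T1 + T2 := by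
      rw [sum_eq_zero_add_units (fun x : F => ψ (c * x ^ 3))]
      have hfib : ∑ u : Fˣ, ψ (c * (u : F) ^ 3)
          = ∑ w : Fˣ, ((univ.filter fun u : Fˣ => u ^ 3 = w).card : ℂ) * ψ (c * (w : F)) := by
        rw [← Finset.sum_fiberwise univ (fun u : Fˣ => u ^ 3) (fun u => ψ (c * (u : F) ^ 3))]
        refine Finset.sum_congr rfl fun w _ => ?_
        rw [Finset.sum_congr rfl (fun u hu => ?_), Finset.sum_const, nsmul_eq_mul]
        have hu3 : u ^ 3 = w := (Finset.mem_filter.mp hu).2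
        rw [← hu3, Units.val_pow_eq_pow_val]
      rw [hfib]
      have hsplit : ∀ w : Fˣ, ((univ.filter fun u : Fˣ => u ^ 3 = w).card : ℂ) * ψ (c * (w : F))
          = ψ (c * (w : F)) + (χ (w : F) * ψ (c * (w : F)) + (χ ^ 2) (w : F) * ψ (c * (w : F))) := by
        intro w
        rw [card_cube_fiber h3 hχ w, MulChar.pow_apply' χ (by norm_num)]
        ring
      rw [Finset.sum_congr rfl (fun w _ => hsplit w), Finset.sum_add_distrib,
        Finset.sum_add_distrib]
      have e1 : ∑ w : Fˣ, ψ (c * (w : F)) = -1 := by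
        have h0 := sum_psi_mul ψ hψ hc
        rw [sum_eq_zero_add_units (fun x : F => ψ (c * x))] at h0
        simp only [mul_zero, AddChar.map_zero_eq_one] at h0
        linear_combination h0
      have e2 : ∑ w : Fˣ, χ (w : F) * ψ (c * (w : F)) = T1 := by
        have h0 : ∑ x : F, χ x * ψ (c * x) = T1 := by
          rw [hT1, gaussSum]
          exact Finset.sum_congr rfl fun x _ => by rw [AddChar.mulShift_apply]
        rw [sum_eq_zero_add_units (fun x : F => χ x * ψ (c * x))] at h0
        rw [← h0, MulChar.map_nonunit χ not_isUnit_zero, zero_mul, zero_add]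
      have e3 : ∑ w : Fˣ, (χ ^ 2) (w : F) * ψ (c * (w : F)) = T2 := by
        have h0 : ∑ x : F, (χ ^ 2) x * ψ (c * x) = T2 := by
          rw [hT2, gaussSum]
          exact Finset.sum_congr rfl fun x _ => by rw [AddChar.mulShift_apply]
        rw [sum_eq_zero_add_units (fun x : F => (χ ^ 2) x * ψ (c * x))] at h0
        rw [← h0, MulChar.map_nonunit (χ ^ 2) not_isUnit_zero, zero_mul, zero_add]
      rw [e1, e2, e3]
      simp only [ne_eq, OfNat.ofNat_ne_zero, not_false_eq_true, zero_pow, mul_zero,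
        AddChar.map_zero_eq_one]
      ring
    have habsT1 : ‖T1‖ = Real.sqrt (Fintype.card F) := by
      have hshift := gaussSum_mulShift χ ψ (Units.mk0 c hc)
      have habs := congrArg (‖·‖) hshift
      rw [norm_mul] at habs
      rw [show ((Units.mk0 c hc : Fˣ) : F) = c from rfl] at habs
      rw [abs_mulChar_eq_one χ hc, one_mul] at habs
      rw [hT1, habs, gauss_abs hχ1 hψ]
    have habsT2 : ‖T2‖ = Real.sqrt (Fintype.card F) := by
      have hshift := gaussSum_mulShift (χ ^ 2) ψ (Units.mk0 c hc)
      have habs := congrArg (‖·‖) hshift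
      rw [norm_mul] at habs
      rw [show ((Units.mk0 c hc : Fˣ) : F) = c from rfl] at habs
      rw [abs_mulChar_eq_one (χ ^ 2) hc, one_mul] at habs
      rw [hT2, habs, gauss_abs hχ21 hψ]
    calc ‖∑ Z : F, ψ (c * Z ^ 3)‖ = ‖T1 + T2‖ := by rw [key]
      _ ≤ ‖T1‖ + ‖T2‖ := norm_add_le T1 T2
      _ = 2 * Real.sqrt (Fintype.card F) := by rw [habsT1, habsT2]; ring
  · rw [Fintype.sum_bijective _ (mulcube_bijective h3 hc) _ (fun y => ψ y) (fun x => rfl),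
      AddChar.sum_eq_zero_of_ne_one hψ]
    simp only [norm_zero]
    positivity

end SBound


private lemma card_split {α : Type*} [Fintype α] (P Q : α → Prop) :
    Nat.card {x // P x} = Nat.card {x // P x ∧ Q x} + Nat.card {x // P x ∧ ¬ Q x} := by
  classical
  simp only [Nat.card_eq_fintype_card, Fintype.card_subtype]
  rw [← Finset.filter_filter P Q, ← Finset.filter_filter P (fun x => ¬ Q x)]
  exact (Finset.card_filter_add_card_filter_not (s := univ.filter P) (p := Q)).symm

section Comb
variable {F : Type*} [Field F] [Fintype F] [CharP F 2]

private lemma card_NM (η h : F) (hη : η ≠ 0) (hh : h ≠ 0) :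
    Nat.card {p : F × F // p.1 ^ 2 + p.1 = (-h * η⁻¹) * p.2 ^ 3}
      = Nat.card {p : F × F // η * p.1 * p.2 * (p.1 + p.2) + h = 0} + 2 := by
  classical
  rw [card_split (fun p : F × F => p.1 ^ 2 + p.1 = (-h * η⁻¹) * p.2 ^ 3) (fun p => p.2 ≠ 0)]
  congr 1
  · apply Nat.card_congr
    refine ⟨fun p => ⟨(p.1.1 * p.1.2⁻¹, p.1.2⁻¹), ?_⟩,
      fun p => ⟨(p.1.1 * p.1.2⁻¹, p.1.2⁻¹), ?_, ?_⟩, ?_, ?_⟩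
    · obtain ⟨⟨t, Z⟩, hE, hZ⟩ := p
      simp only [ne_eq] at hZ
      simp only
      field_simp
      field_simp at hE
      linear_combination hE
    · obtain ⟨⟨X, Y⟩, hN⟩ := p
      have hY : Y ≠ 0 := by
        rintro rfl
        simp only [mul_zero, zero_mul, add_zero, zero_add] at hN
        exact hh hN
      simp only
      field_simp
      linear_combination hN
    · obtain ⟨⟨X, Y⟩, hN⟩ := p
      have hY : Y ≠ 0 := by
        rintro rfl
        simp only [mul_zero, zero_mul, add_zero, zero_add] at hN
        exact hh hN
      simp only [ne_eq]
      exact inv_ne_zero hY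
    · rintro ⟨⟨t, Z⟩, hE, hZ⟩
      simp only [ne_eq] at hZ
      ext
      · simp only
        rw [inv_inv]
        field_simp
      · simp only [inv_inv]
    · rintro ⟨⟨X, Y⟩, hN⟩
      have hY : Y ≠ 0 := by
        rintro rfl
        simp only [mul_zero, zero_mul, add_zero, zero_add] at hN
        exact hh hN
      ext
      · simp only
        rw [inv_inv]
        field_simp
      · simp only [inv_inv]
  · have e : {p : F × F // (p.1 ^ 2 + p.1 = (-h * η⁻¹) * p.2 ^ 3) ∧ ¬ p.2 ≠ 0}
        ≃ {t : F // t ^ 2 + t = 0} := by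
      refine ⟨fun p => ⟨p.1.1, ?_⟩, fun t => ⟨(t.1, 0), by simp [t.2], by simp⟩, ?_, ?_⟩
      · have h2 : p.1.2 = 0 := not_not.mp p.2.2
        have h1 := p.2.1
        rw [h2] at h1
        simpa using h1
      · rintro ⟨⟨t, Z⟩, hE, hZ⟩
        have h2 : Z = 0 := not_not.mp hZ
        subst h2
        rfl
      · rintro ⟨t, ht⟩
        rfl
    rw [Nat.card_congr e, card_AS_zero]

private lemma card_M_sum (c : F) :
    (Nat.card {p : F × F // p.1 ^ 2 + p.1 = c * p.2 ^ 3} : ℂ)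
      = ∑ Z : F, (Nat.card {t : F // t ^ 2 + t = c * Z ^ 3} : ℂ) := by
  classical
  have e : {p : F × F // p.1 ^ 2 + p.1 = c * p.2 ^ 3}
      ≃ Σ Z : F, {t : F // t ^ 2 + t = c * Z ^ 3} :=
    ⟨fun p => ⟨p.1.2, p.1.1, p.2⟩, fun x => ⟨(x.2.1, x.1), x.2.2⟩,
      fun p => rfl, fun x => rfl⟩
  rw [Nat.card_congr e, Nat.card_eq_fintype_card, Fintype.card_sigma]
  push_cast
  exact Finset.sum_congr rfl fun Z _ => by rw [Nat.card_eq_fintype_card]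

end Comb

/-- For `q = 2^m` and `η, h ∈ 𝔽_q^*`, the number `N` of solutions `(X,Y) ∈ 𝔽_q²` of
`η X Y (X + Y) + h = 0` satisfies `|N - (q - 2)| ≤ 2√q`. -/
theorem stmt_10 {F : Type*} [Field F] [Fintype F] (m : ℕ)
    (hq : Fintype.card F = 2 ^ m) (η h : F) (hη : η ≠ 0) (hh : h ≠ 0) :
    |(Nat.card {p : F × F // η * p.1 * p.2 * (p.1 + p.2) + h = 0} : ℝ) -
        ((Fintype.card F : ℝ) - 2)| ≤ 2 * Real.sqrt (Fintype.card F) := by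
  classical
  have hchar : CharP F 2 := by
    have h1 : CharP F (ringChar F) := ringChar.charP F
    have hprime : (ringChar F).Prime := CharP.char_is_prime F (ringChar F)
    obtain ⟨n, hn, hcard⟩ := FiniteField.card F (ringChar F)
    rw [hq] at hcard
    have hdvd : ringChar F ∣ 2 ^ m := by
      rw [hcard]
      exact dvd_pow_self (ringChar F) (by exact_mod_cast n.pos.ne')
    have h2 : ringChar F = 2 :=
      (Nat.prime_dvd_prime_iff_eq hprime Nat.prime_two).mp (hprime.dvd_of_dvd_pow hdvd)
    rwa [h2] at h1
  obtain ⟨ψ, hψ1, hψcount⟩ := exists_psi (F := F)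
  have hc0 : (-h * η⁻¹ : F) ≠ 0 := mul_ne_zero (neg_ne_zero.mpr hh) (inv_ne_zero hη)
  have hM : ((Nat.card {p : F × F // η * p.1 * p.2 * (p.1 + p.2) + h = 0} + 2 : ℕ) : ℂ)
      = (Fintype.card F : ℂ) + ∑ Z : F, ψ ((-h * η⁻¹) * Z ^ 3) := by
    rw [← card_NM η h hη hh, card_M_sum]
    rw [Finset.sum_congr rfl (fun Z _ => hψcount ((-h * η⁻¹) * Z ^ 3)),
      Finset.sum_add_distrib]
    simp [Finset.card_univ]
  have hSr : ((((Nat.card {p : F × F // η * p.1 * p.2 * (p.1 + p.2) + h = 0} : ℝ))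
        - ((Fintype.card F : ℝ) - 2) : ℝ) : ℂ) = ∑ Z : F, ψ ((-h * η⁻¹) * Z ^ 3) := by
    push_cast at hM ⊢
    linear_combination hM
  have hfin : |(Nat.card {p : F × F // η * p.1 * p.2 * (p.1 + p.2) + h = 0} : ℝ)
      - ((Fintype.card F : ℝ) - 2)| = ‖∑ Z : F, ψ ((-h * η⁻¹) * Z ^ 3)‖ := by
    rw [← hSr, Complex.norm_real, Real.norm_eq_abs]
  rw [hfin]
  exact abs_S_le ψ hψ1 hc0
end

section
/- Let q = 2^m with m odd, η, a₁ ∈ 𝔽_q^*. Then for all x₁ ∈ 𝔽_q^* and all λ ∈ 𝔽_q^* \ {1}, we have η a₁ (1 + λ + λ²) x₁² + a₁ (1 + λ) x₁ + a₁ η^{−1} ≠ 0. -/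
/-- In a field of cardinality `2^m` with `m` odd, no element satisfies `w² + w + 1 = 0`. -/
lemma no_cube_aux {F : Type*} [Field F] [Fintype F] (m : ℕ) (hm : Odd m)
    (hq : Fintype.card F = 2 ^ m) (w : F) (hw : w ^ 2 + w + 1 = 0) : False := by
  have h2 : (2 : F) = 0 := by
    have hc : ((Fintype.card F : ℕ) : F) = 0 := FiniteField.cast_card_eq_zero F
    rw [hq] at hc
    push_cast at hc
    exact pow_eq_zero_iff hm.pos.ne' |>.mp hc
  have hw1 : w ≠ 1 := by
    intro h; rw [h] at hw
    exact one_ne_zero (α := F) (by linear_combination hw - h2)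
  have hw0 : w ≠ 0 := by
    intro h; rw [h] at hw; norm_num at hw
  have hw3 : w ^ 3 = 1 := by linear_combination (w - 1) * hw
  have hdvd3 : orderOf w ∣ 3 := orderOf_dvd_of_pow_eq_one hw3
  have hwq : w ^ (Fintype.card F - 1) = 1 := FiniteField.pow_card_sub_one_eq_one w hw0
  have hdvdq : orderOf w ∣ Fintype.card F - 1 := orderOf_dvd_of_pow_eq_one hwq
  have h3 : ¬ (3 ∣ Fintype.card F - 1) := by
    rw [hq]
    intro h
    have h1 : (1 : ℕ) ≤ 2 ^ m := Nat.one_le_two_pow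
    have hz : ((2 ^ m - 1 : ℕ) : ZMod 3) = 0 := (ZMod.natCast_eq_zero_iff _ _).mpr h
    rw [Nat.cast_sub h1] at hz
    push_cast at hz
    rw [show (2 : ZMod 3) = -1 by decide, hm.neg_one_pow] at hz
    exact absurd hz (by decide)
  rcases (Nat.prime_three.eq_one_or_self_of_dvd _ hdvd3) with h | h
  · exact hw1 (orderOf_eq_one_iff.mp h)
  · rw [h] at hdvdq; exact h3 hdvdq

/-- For `q = 2^m` with `m` odd and `η, a₁ ∈ 𝔽_q^*`: for all `x₁ ∈ 𝔽_q^*` and all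
`λ ∈ 𝔽_q^* \ {1}` one has `η a₁ (1 + λ + λ²) x₁² + a₁ (1 + λ) x₁ + a₁ η⁻¹ ≠ 0`. -/
theorem stmt_15 {F : Type*} [Field F] [Fintype F] (m : ℕ) (hm : Odd m)
    (hq : Fintype.card F = 2 ^ m) (η a₁ : F) (hη : η ≠ 0) (ha₁ : a₁ ≠ 0) :
    ∀ x₁ : F, x₁ ≠ 0 → ∀ l : F, l ≠ 0 → l ≠ 1 →
      η * a₁ * (1 + l + l ^ 2) * x₁ ^ 2 + a₁ * (1 + l) * x₁ + a₁ * η⁻¹ ≠ 0 := by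
  intro x hx l hl0 hl1 h
  have h2 : (2 : F) = 0 := by
    have hc : ((Fintype.card F : ℕ) : F) = 0 := FiniteField.cast_card_eq_zero F
    rw [hq] at hc
    push_cast at hc
    exact pow_eq_zero_iff hm.pos.ne' |>.mp hc
  have hB : (1 : F) + l ≠ 0 := by
    intro hb
    exact hl1 (by linear_combination hb - h2)
  have ha' : a₁ * a₁⁻¹ = 1 := mul_inv_cancel₀ ha₁
  field_simp at h
  -- h : (η * a₁ * (1 + l + l ^ 2) * x ^ 2 + a₁ * (1 + l) * x) * η + a₁ = 0
  have h'' : η ^ 2 * (1 + l + l ^ 2) * x ^ 2 + η * (1 + l) * x + 1 = 0 := by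
    linear_combination a₁⁻¹ * h - (η ^ 2 * (1 + l + l ^ 2) * x ^ 2 + η * (1 + l) * x + 1) * ha'
  set N := η * (1 + l + l ^ 2) * x + l with hN
  have key : N ^ 2 + N * (1 + l) + (1 + l) ^ 2 = 0 := by
    rw [hN]
    linear_combination (1 + l + l ^ 2) * h'' + (η * (1 + l + l ^ 2) * x * l + l + l ^ 2) * h2
  have hw : (N / (1 + l)) ^ 2 + (N / (1 + l)) + 1 = 0 := by
    field_simp
    linear_combination key
  exact no_cube_aux m hm hq _ hw
end

section
/- Let q ≥ 7 be odd and η ∈ 𝔽_q^*, and let b ∈ 𝔽_q^*. With a₀ = 0, a₁ = 2bη, a₂ = b, a₃ = b/(4η), there exist pairwise distinct x₁, x₂, x₃ ∈ 𝔽_q^* such that Σ_{j=0}^{2} a_j c_{3−j} − η Σ_{j=0}^{2} a_j Σ_{max{0,j−1} ≤ w ≤ j} c_{3−w} Λ'_{1+w−j} + a₃ = 0, where ∏_{j=1}^3 (x − x_j) = Σ_{j=0}^3 c_j x^{3−j} and Λ'₀ = 1, Λ'_i = −Σ_{ℓ=1}^i c_ℓ Λ'_{i−ℓ}. -/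
lemma esymmF0 {F : Type*} [CommRing F] (x : Fin 3 → F) : esymmF x 0 = 1 := by
  simp [esymmF, show Finset.powersetCard 0 (Finset.univ : Finset (Fin 3)) = {∅} from by decide]

lemma esymmF1 {F : Type*} [CommRing F] (x : Fin 3 → F) : esymmF x 1 = x 0 + x 1 + x 2 := by
  rw [esymmF,
    show Finset.powersetCard 1 (Finset.univ : Finset (Fin 3)) = {{0},{1},{2}} from by decide,
    Finset.sum_insert (by decide), Finset.sum_insert (by decide), Finset.sum_singleton]
  simp only [Finset.prod_singleton]; ring

lemma esymmF2 {F : Type*} [CommRing F] (x : Fin 3 → F) :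
    esymmF x 2 = x 0 * x 1 + x 0 * x 2 + x 1 * x 2 := by
  rw [esymmF,
    show Finset.powersetCard 2 (Finset.univ : Finset (Fin 3)) = {{0,1},{0,2},{1,2}} from by decide,
    Finset.sum_insert (by decide), Finset.sum_insert (by decide), Finset.sum_singleton,
    Finset.prod_insert (by decide), Finset.prod_insert (by decide), Finset.prod_insert (by decide)]
  simp only [Finset.prod_singleton]; ring

lemma esymmF3 {F : Type*} [CommRing F] (x : Fin 3 → F) :
    esymmF x 3 = x 0 * x 1 * x 2 := by
  rw [esymmF,
    show Finset.powersetCard 3 (Finset.univ : Finset (Fin 3)) = {{0,1,2}} from by decide,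
    Finset.sum_singleton, Finset.prod_insert (by decide), Finset.prod_insert (by decide),
    Finset.prod_singleton]
  ring

lemma Lam0 {F : Type*} [Field F] (c : ℕ → F) : Lam c 0 = 1 := by simp [Lam]

lemma Lam1 {F : Type*} [Field F] (c : ℕ → F) : Lam c 1 = - c 1 := by
  rw [Lam]; simp [Lam]

/-- For odd `q ≥ 7`, `η, b ∈ 𝔽_q^*`, with `a₀ = 0`, `a₁ = 2bη`, `a₂ = b`,
`a₃ = b/(4η)`, there exist pairwise distinct `x₁, x₂, x₃ ∈ 𝔽_q^*` such that
`∑_{j=0}^{2} a_j c_{3-j} - η ∑_{j=0}^{2} a_j ∑_{max(0,j-1) ≤ w ≤ j} c_{3-w} Λ'_{1+w-j}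
 + a₃ = 0`, with `c_j = (-1)^j e_j(x₁,x₂,x₃)`. -/
theorem stmt_18 {F : Type*} [Field F] [Fintype F]
    (hodd : Odd (Fintype.card F)) (hq7 : 7 ≤ Fintype.card F)
    (η b : F) (hη : η ≠ 0) (hb : b ≠ 0)
    (a : ℕ → F) (hA0 : a 0 = 0) (hA1 : a 1 = 2 * b * η) (hA2 : a 2 = b)
    (hA3 : a 3 = b * (4 * η)⁻¹) :
    ∃ x : Fin 3 → F, Function.Injective x ∧ (∀ i, x i ≠ 0) ∧
      (∑ j ∈ Finset.range 3, a j * ((-1 : F) ^ (3 - j) * esymmF x (3 - j))) -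
          η * ∑ j ∈ Finset.range 3,
            a j * ∑ w ∈ Finset.Icc (j - 1) j,
              ((-1 : F) ^ (3 - w) * esymmF x (3 - w)) *
                Lam (fun t => (-1 : F) ^ t * esymmF x t) (1 + w - j) +
        a 3 = 0 := by
  have h2 : (2 : F) ≠ 0 := by
    intro h
    have hc : ringChar F = 2 :=
      CharP.ringChar_of_prime_eq_zero Nat.prime_two (by exact_mod_cast h)
    have := FiniteField.even_card_of_char_two hc
    rw [Nat.odd_iff] at hodd
    omega
  have h4 : (4 : F) ≠ 0 := by
    intro h
    apply h2
    have h44 : (4 : F) = 2 * 2 := by norm_num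
    rcases mul_eq_zero.mp (h44 ▸ h) with h' | h' <;> exact h'
  classical
  have h2η : (2 * η : F) ≠ 0 := mul_ne_zero h2 hη
  have h4η : (4 * η : F) ≠ 0 := mul_ne_zero h4 hη
  set u : F := (2 * η)⁻¹ with hu
  have hune : u ≠ 0 := inv_ne_zero h2η
  have hu21 : (2 * η) * u = 1 := mul_inv_cancel₀ h2η
  obtain ⟨t, ht0, htmu, htu, ht4, hte⟩ :
      ∃ t : F, t ≠ 0 ∧ t ≠ -u ∧ t ≠ u ∧ t ≠ -(4*η)⁻¹ ∧ t ≠ -η⁻¹ := by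
    by_contra hcon
    push_neg at hcon
    have hsub : (Finset.univ : Finset F) ⊆ ({0, -u, u, -(4*η)⁻¹, -η⁻¹} : Finset F) := by
      intro y _
      simp only [Finset.mem_insert, Finset.mem_singleton]
      by_cases hy0 : y = 0
      · exact Or.inl hy0
      by_cases hy1 : y = -u
      · exact Or.inr (Or.inl hy1)
      by_cases hy2 : y = u
      · exact Or.inr (Or.inr (Or.inl hy2))
      by_cases hy3 : y = -(4*η)⁻¹
      · exact Or.inr (Or.inr (Or.inr (Or.inl hy3)))
      exact Or.inr (Or.inr (Or.inr (Or.inr (hcon y hy0 hy1 hy2 hy3))))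
    have hle := Finset.card_le_card hsub
    rw [Finset.card_univ] at hle
    have h5 : ({0, -u, u, -(4*η)⁻¹, -η⁻¹} : Finset F).card ≤ 5 := by
      refine (Finset.card_insert_le _ _).trans (Nat.add_le_add_right ?_ 1)
      refine (Finset.card_insert_le _ _).trans (Nat.add_le_add_right ?_ 1)
      refine (Finset.card_insert_le _ _).trans (Nat.add_le_add_right ?_ 1)
      refine (Finset.card_insert_le _ _).trans (Nat.add_le_add_right ?_ 1)
      simp
    omega
  have h01 : u + t ≠ -t := by
    intro h
    apply ht4
    rw [show -(4*η)⁻¹ = (-1)/(4*η) by ring, eq_div_iff h4η]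
    linear_combination (2*η)*h - hu21
  have h02 : u + t ≠ -u := by
    intro h
    apply hte
    rw [show -(η:F)⁻¹ = (-1)/η by ring, eq_div_iff hη]
    linear_combination η*h - hu21
  have h12 : -t ≠ -u := fun h => htu (neg_injective h)
  have hn0 : u + t ≠ 0 := by
    intro h
    exact htmu (by linear_combination h)
  refine ⟨![u + t, -t, -u], ?_, ?_, ?_⟩
  · intro i j hij
    fin_cases i <;> fin_cases j <;>
      simp only [Matrix.cons_val_zero, Matrix.cons_val_one, Matrix.head_cons,
        Matrix.cons_val_two, Matrix.tail_cons, Fin.mk_zero, Fin.mk_one] at hij <;>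
      first
        | rfl
        | exact absurd hij h01
        | exact absurd hij h02
        | exact absurd hij h12
        | exact absurd hij.symm h01
        | exact absurd hij.symm h02
        | exact absurd hij.symm h12
  · intro i
    fin_cases i
    · exact hn0
    · exact neg_ne_zero.mpr ht0
    · exact neg_ne_zero.mpr hune
  · set x : Fin 3 → F := ![u + t, -t, -u] with hx
    have hx0 : x 0 = u + t := rfl
    have hx1 : x 1 = -t := rfl
    have hx2 : x 2 = -u := rfl
    have hI0 : Finset.Icc (0 - 1 : ℕ) 0 = {0} := by decide
    have hI1 : Finset.Icc (1 - 1 : ℕ) 1 = {0, 1} := by decide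
    have hI2 : Finset.Icc (2 - 1 : ℕ) 2 = {1, 2} := by decide
    rw [Finset.sum_range_succ, Finset.sum_range_succ, Finset.sum_range_succ,
      Finset.sum_range_succ, Finset.sum_range_succ, Finset.sum_range_succ,
      Finset.sum_range_zero, Finset.sum_range_zero, hI0, hI1, hI2,
      Finset.sum_singleton, Finset.sum_insert (by decide), Finset.sum_singleton,
      Finset.sum_insert (by decide), Finset.sum_singleton]
    norm_num [Lam0, Lam1, esymmF0, esymmF1, esymmF2, esymmF3, hx0, hx1, hx2,
      hA0, hA1, hA2, hA3]
    field_simp [hη, h2]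
    have hP : η * η⁻¹ = 1 := mul_inv_cancel₀ hη
    have hQ : (2:F) * (2:F)⁻¹ = 1 := mul_inv_cancel₀ h2
    linear_combination
      ((((-2)*b*η*t + 4*b*η^2*t^2) + (-b + 2*b*η*t)*(2*η*η⁻¹*2⁻¹ + 1)) * (2*(2:F)⁻¹)) * hP +
      (((-2)*b*η*t + 4*b*η^2*t^2) + (-b + 2*b*η*t)*(2*η*η⁻¹*2⁻¹ + 1)) * hQ
end

section
/- Let q be a prime power, χ a nontrivial additive character of 𝔽_q, n ∈ ℕ, and d = gcd(n, q−1). Then for any a ∈ 𝔽_q^* and b ∈ 𝔽_q, |Σ_{c ∈ 𝔽_q} χ(a cⁿ + b)| ≤ (d−1)·√q. -/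
open Finset

/-- In a finite cyclic group, the number of solutions of `x ^ d = 1` is `d`, when `d` divides
the order of the group. -/
private lemma weil_card_pow_eq_one {G : Type*} [CommGroup G] [Fintype G] [IsCyclic G]
    [DecidableEq G] {d : ℕ} (hd : d ∣ Fintype.card G) (hd0 : 0 < d) :
    (Finset.univ.filter fun x : G => x ^ d = 1).card = d := by
  classical
  obtain ⟨g, hg⟩ := IsCyclic.exists_generator (α := G)
  have hog : orderOf g = Fintype.card G := by
    rw [orderOf_eq_card_of_forall_mem_zpowers hg, Nat.card_eq_fintype_card]
  have hcard0 : 0 < Fintype.card G := Fintype.card_pos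
  have h1 : Fintype.card G / d ≠ 0 := (Nat.div_pos (Nat.le_of_dvd hcard0 hd) hd0).ne'
  set a := g ^ (Fintype.card G / d) with ha_def
  have ha : orderOf a = d := by
    rw [ha_def, orderOf_pow_of_dvd h1 (by rw [hog]; exact Nat.div_dvd_of_dvd hd), hog,
      Nat.div_div_self hd hcard0.ne']
  refine le_antisymm ?_ ?_
  · simpa using IsCyclic.card_pow_eq_one_le (α := G) hd0
  · have had : a ^ d = 1 := by rw [← ha]; exact pow_orderOf_eq_one a
    have hsub : (Subgroup.zpowers a : Set G).toFinset ⊆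
        Finset.univ.filter fun x : G => x ^ d = 1 := by
      intro x hx
      rw [Set.mem_toFinset] at hx
      obtain ⟨i, rfl⟩ := hx
      simp only [mem_filter, mem_univ, true_and]
      calc (a ^ i) ^ d = (a ^ (d : ℤ)) ^ i := by
            rw [← zpow_natCast (a ^ i), ← zpow_mul, mul_comm, zpow_mul]
        _ = 1 := by rw [zpow_natCast, had, one_zpow]
    have h2 := Finset.card_le_card hsub
    simpa only [Set.toFinset_card, SetLike.coe_sort_coe, Fintype.card_zpowers, ha] using h2

/-- The absolute value of a Gauss sum of a nontrivial multiplicative character with a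
primitive additive character over a finite field is `√q`. -/
private lemma weil_abs_gaussSum {F : Type*} [Field F] [Fintype F] {ψ : MulChar F ℂ} (hψ : ψ ≠ 1)
    {φ : AddChar F ℂ} (hφ : φ.IsPrimitive) :
    ‖gaussSum ψ φ‖ = Real.sqrt (Fintype.card F) := by
  have hchar : 0 < ringChar F := Nat.pos_of_ne_zero (CharP.ringChar_ne_zero_of_finite F)
  have hconj : (starRingEnd ℂ) (gaussSum ψ φ) = gaussSum ψ⁻¹ φ⁻¹ := by
    rw [gaussSum, map_sum]
    refine Finset.sum_congr rfl fun x _ => ?_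
    rw [map_mul, AddChar.starComp_apply hchar]
    congr 1
    exact MulChar.star_apply' ψ x
  have hsq : gaussSum ψ φ * (starRingEnd ℂ) (gaussSum ψ φ) = (Fintype.card F : ℂ) := by
    rw [hconj]; exact gaussSum_mul_gaussSum_eq_card hψ hφ
  rw [Complex.mul_conj] at hsq
  have h : Complex.normSq (gaussSum ψ φ) = (Fintype.card F : ℝ) := by exact_mod_cast hsq
  rw [Complex.norm_def, h]

/-- Weil bound for diagonal character sums: for a nontrivial additive character `χ`
of `𝔽_q`, `n ≥ 1`, `d = gcd(n, q-1)`, and `a ∈ 𝔽_q^*`, `b ∈ 𝔽_q`: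
`|∑_{c ∈ 𝔽_q} χ(a cⁿ + b)| ≤ (d - 1)√q`. -/
theorem stmt_19 {F : Type*} [Field F] [Fintype F]
    (χ : AddChar F ℂ) (hχ : ∃ x, χ x ≠ 1)
    (n : ℕ) (hn : 0 < n) (a b : F) (ha : a ≠ 0) :
    ‖∑ c : F, χ (a * c ^ n + b)‖ ≤
      ((Nat.gcd n (Fintype.card F - 1) : ℝ) - 1) * Real.sqrt (Fintype.card F) := by
  classical
  set q := Fintype.card F with hq
  have h2q : 1 < q := Fintype.one_lt_card
  set N := q - 1 with hN
  have hN0 : 0 < N := by omega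
  set d := Nat.gcd n N with hd
  have hd0 : 0 < d := Nat.gcd_pos_of_pos_left _ hn
  have hdn : d ∣ n := Nat.gcd_dvd_left _ _
  have hdN : d ∣ N := Nat.gcd_dvd_right _ _
  have hcardU : Fintype.card Fˣ = N := by rw [Fintype.card_units]
  have hchar : 0 < ringChar F := Nat.pos_of_ne_zero (CharP.ringChar_ne_zero_of_finite F)
  -- χ is nontrivial, hence primitive
  have hχ1 : χ ≠ 1 := by
    obtain ⟨x, hx⟩ := hχ
    intro h; exact hx (by rw [h]; simp)
  have hprim : χ.IsPrimitive := AddChar.IsPrimitive.of_ne_one hχ1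
  set χa := χ.mulShift a with hχa
  have hχa1 : χa ≠ 1 := hprim ha
  have hχaprim : χa.IsPrimitive := AddChar.IsPrimitive.of_ne_one hχa1
  -- multiplicative character group instances
  haveI : Fintype (MulChar F ℂ) := Fintype.ofFinite _
  haveI : NeZero (Fintype.card Fˣ) := ⟨by rw [hcardU]; omega⟩
  let e := MulChar.equiv_rootsOfUnity F ℂ
  haveI : IsCyclic (MulChar F ℂ) := isCyclic_of_surjective e.symm.toMonoidHom e.symm.surjective
  have hcardM : Fintype.card (MulChar F ℂ) = N := by
    rw [Fintype.card_eq_nat_card, Nat.card_congr e.toEquiv, Complex.card_rootsOfUnity, hcardU]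
  set H : Finset (MulChar F ℂ) := univ.filter (fun ψ => ψ ^ d = 1) with hH
  have hHcard : H.card = d := weil_card_pow_eq_one (hcardM ▸ hdN) hd0
  have h1H : (1 : MulChar F ℂ) ∈ H := by simp [hH]
  -- generator of Fˣ
  obtain ⟨g, hg⟩ := IsCyclic.exists_generator (α := Fˣ)
  have hog : orderOf g = N := by
    rw [orderOf_eq_card_of_forall_mem_zpowers hg, Nat.card_eq_fintype_card, hcardU]
  -- the number of d-th roots of unity in F is d
  have hNd0 : 0 < N / d := Nat.div_pos (Nat.le_of_dvd hN0 hdN) hd0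
  have hker : (univ.filter fun c : F => c ^ d = 1).card = d := by
    have hu : orderOf (g ^ (N / d)) = d := by
      rw [orderOf_pow_of_dvd hNd0.ne' (by rw [hog]; exact Nat.div_dvd_of_dvd hdN), hog,
        Nat.div_div_self hdN hN0.ne']
    have hprt : IsPrimitiveRoot ((g ^ (N / d) : Fˣ) : F) d := by
      have h := IsPrimitiveRoot.orderOf ((g ^ (N / d) : Fˣ) : F)
      rwa [orderOf_units, hu] at h
    have heq : (univ.filter fun c : F => c ^ d = 1) = Polynomial.nthRootsFinset d (1 : F) := by
      ext c; simp [Polynomial.mem_nthRootsFinset hd0]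
    rw [heq, hprt.card_nthRootsFinset]
  -- kernels for exponents n and d agree
  have hkereq : ∀ c : F, c ^ n = 1 ↔ c ^ d = 1 := by
    intro c
    rcases eq_or_ne c 0 with rfl | hc
    · simp [zero_pow hn.ne', zero_pow hd0.ne']
    · have hcN : orderOf c ∣ N :=
        orderOf_dvd_of_pow_eq_one (FiniteField.pow_card_sub_one_eq_one c hc)
      rw [← orderOf_dvd_iff_pow_eq_one, ← orderOf_dvd_iff_pow_eq_one, hd, Nat.dvd_gcd_iff]
      exact ⟨fun h => ⟨h, hcN⟩, fun h => h.1⟩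
  -- every d-th power of a nonzero element is an n-th power
  have hrange : ∀ z : F, z ≠ 0 → ∃ w : F, w ^ n = z ^ d := by
    intro z hz
    refine ⟨z ^ (Nat.gcdA n N), ?_⟩
    have hzN : z ^ (N : ℤ) = 1 := by
      rw [zpow_natCast]; exact FiniteField.pow_card_sub_one_eq_one z hz
    have hbez : (d : ℤ) = n * Nat.gcdA n N + N * Nat.gcdB n N := Nat.gcd_eq_gcd_ab n N
    have key : z ^ (d : ℤ) = z ^ ((n : ℤ) * Nat.gcdA n N) := by
      rw [hbez, zpow_add₀ hz, zpow_mul z (N : ℤ), hzN, one_zpow, mul_one]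
    have h2 : (z ^ Nat.gcdA n N) ^ (n : ℕ) = z ^ ((n : ℤ) * Nat.gcdA n N) := by
      rw [← zpow_natCast (z ^ Nat.gcdA n N), ← zpow_mul, mul_comm]
    rw [h2, ← key, zpow_natCast]
  -- orthogonality : for y ≠ 0 the number of c with c^n = y is ∑_{ψ ∈ H} ψ y
  have horth : ∀ y : F, y ≠ 0 →
      ((univ.filter fun c : F => c ^ n = y).card : ℂ) = ∑ ψ ∈ H, ψ y := by
    intro y hy
    by_cases hex : ∃ z : F, z ^ d = y
    · obtain ⟨z, hz⟩ := hex
      have hz0 : z ≠ 0 := by rintro rfl; exact hy (by rw [← hz, zero_pow hd0.ne'])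
      obtain ⟨w, hw⟩ := hrange z hz0
      rw [hz] at hw
      have hbij : (univ.filter fun c : F => c ^ n = y).card =
          (univ.filter fun c : F => c ^ n = 1).card := by
        refine Finset.card_nbij' (fun c => c * w⁻¹) (fun c => c * w) ?_ ?_ ?_ ?_
        · intro c hc; simp only [coe_filter, Set.mem_setOf_eq, mem_filter, mem_univ, true_and] at hc ⊢
          rw [mul_pow, hc, inv_pow, hw, mul_inv_cancel₀ hy]
        · intro c hc; simp only [coe_filter, Set.mem_setOf_eq, mem_filter, mem_univ, true_and] at hc ⊢
          rw [mul_pow, hc, one_mul, hw]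
        · intro c _;
          have hw0 : w ≠ 0 := by rintro rfl; exact hy (by rw [← hw, zero_pow hn.ne'])
          field_simp
        · intro c _;
          have hw0 : w ≠ 0 := by rintro rfl; exact hy (by rw [← hw, zero_pow hn.ne'])
          field_simp
      have hLHS : (univ.filter fun c : F => c ^ n = y).card = d := by
        rw [hbij, Finset.filter_congr (fun c _ => by rw [hkereq c])]
        exact hker
      have hRHS : ∑ ψ ∈ H, ψ y = (d : ℂ) := by
        rw [Finset.sum_congr rfl (fun ψ hψ => ?_), Finset.sum_const, hHcard, nsmul_eq_mul,
          mul_one]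
        simp only [hH, mem_filter, mem_univ, true_and] at hψ
        rw [← hz, map_pow, ← MulChar.pow_apply' ψ hd0.ne', hψ,
          MulChar.one_apply (isUnit_iff_ne_zero.mpr hz0)]
      rw [hLHS, hRHS]
    · -- no d-th root : both sides are 0
      have hLHS : (univ.filter fun c : F => c ^ n = y) = ∅ := by
        rw [Finset.filter_eq_empty_iff]
        intro c _ hc
        exact hex ⟨c ^ (n / d), by rw [← pow_mul, Nat.div_mul_cancel hdn, hc]⟩
      -- construct a character ψ₀ ∈ H with ψ₀ y ≠ 1
      have hfin : IsOfFinOrder g := by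
        rw [← orderOf_pos_iff, hog]; exact hN0
      obtain ⟨m, hm⟩ := hfin.mem_powers_iff_mem_zpowers.mpr (hg (Units.mk0 y hy))
      have hm' : g ^ m = Units.mk0 y hy := hm
      have hy' : y = (g : F) ^ m := by
        rw [← Units.val_pow_eq_pow_val, hm', Units.val_mk0]
      have hdm : ¬ d ∣ m := by
        rintro ⟨t, rfl⟩
        exact hex ⟨(g : F) ^ t, by rw [← pow_mul, mul_comm t d, hy']⟩
      set ζ : ℂ := Complex.exp (2 * Real.pi * Complex.I / N) with hζdef
      have hζ : IsPrimitiveRoot ζ N := Complex.isPrimitiveRoot_exp N hN0.ne'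
      have hζu : (hζ.isUnit hN0.ne').unit ∈ rootsOfUnity (Fintype.card Fˣ) ℂ := by
        rw [mem_rootsOfUnity, Units.ext_iff, Units.val_pow_eq_pow_val, IsUnit.unit_spec,
          Units.val_one, hcardU]
        exact hζ.pow_eq_one
      set χ₀ : MulChar F ℂ := MulChar.ofRootOfUnity hζu hg with hχ₀def
      have hχ₀g : χ₀ (g : F) = ζ := by
        rw [hχ₀def, MulChar.ofRootOfUnity_spec, IsUnit.unit_spec]
      set ψ₀ : MulChar F ℂ := χ₀ ^ (N / d) with hψ₀def
      have hψ₀H : ψ₀ ∈ H := by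
        simp only [hH, mem_filter, mem_univ, true_and, hψ₀def]
        rw [← pow_mul, Nat.div_mul_cancel hdN, ← hcardU]
        exact χ₀.pow_card_eq_one
      have hψ₀y : ψ₀ y ≠ 1 := by
        rw [hψ₀def, MulChar.pow_apply' χ₀ hNd0.ne', hy', map_pow, hχ₀g, ← pow_mul, Ne,
          hζ.pow_eq_one_iff_dvd]
        intro hdvd
        apply hdm
        have h2 : d * (N / d) ∣ m * (N / d) := by
          rw [Nat.mul_div_cancel' hdN]; exact hdvd
        exact (Nat.mul_dvd_mul_iff_right hNd0).mp h2
      have hshift : ψ₀ y * ∑ ψ ∈ H, ψ y = ∑ ψ ∈ H, ψ y := by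
        rw [Finset.mul_sum]
        refine Finset.sum_nbij' (fun ψ => ψ₀ * ψ) (fun ψ => ψ₀⁻¹ * ψ) ?_ ?_ ?_ ?_ ?_
        · intro ψ hψ
          simp only [hH, mem_filter, mem_univ, true_and] at hψ ⊢
          have h₀ : ψ₀ ^ d = 1 := by
            simpa only [hH, mem_filter, mem_univ, true_and] using hψ₀H
          rw [mul_pow, h₀, hψ, one_mul]
        · intro ψ hψ
          simp only [hH, mem_filter, mem_univ, true_and] at hψ ⊢
          have h₀ : ψ₀ ^ d = 1 := by
            simpa only [hH, mem_filter, mem_univ, true_and] using hψ₀H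
          rw [mul_pow, inv_pow, h₀, inv_one, hψ, one_mul]
        · intro ψ _; simp
        · intro ψ _; simp
        · intro ψ _
          simp only [MulChar.coeToFun_mul, Pi.mul_apply]
      have hzero : ∑ ψ ∈ H, ψ y = 0 := by
        by_contra h0
        exact hψ₀y (mul_right_cancel₀ h0 (hshift.trans (one_mul _).symm))
      rw [hLHS, hzero]
      simp
  -- split off χ b
  have hsplit : (∑ c : F, χ (a * c ^ n + b)) = (∑ c : F, χ (a * c ^ n)) * χ b := by
    rw [Finset.sum_mul]
    exact Finset.sum_congr rfl fun c _ => by rw [AddChar.map_add_eq_mul]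
  -- rewrite the sum fiberwise
  have hfiber : (∑ c : F, χ (a * c ^ n)) =
      ∑ y : F, ((univ.filter fun c : F => c ^ n = y).card : ℂ) * χ (a * y) := by
    rw [← Finset.sum_fiberwise univ (fun c : F => c ^ n) (fun c => χ (a * c ^ n))]
    refine Finset.sum_congr rfl fun y _ => ?_
    rw [Finset.sum_congr rfl (fun c hc => by rw [(Finset.mem_filter.mp hc).2]),
      Finset.sum_const, nsmul_eq_mul]
  have h0fib : (univ.filter fun c : F => c ^ n = (0 : F)) = {0} := by
    ext c; simp [pow_eq_zero_iff hn.ne']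
  -- pointwise identity
  have hpoint : ∀ y : F, ((univ.filter fun c : F => c ^ n = y).card : ℂ) * χ (a * y) =
      (if y = 0 then 1 else 0) + (∑ ψ ∈ H, ψ y) * χ (a * y) := by
    intro y
    rcases eq_or_ne y 0 with rfl | hy
    · rw [h0fib]
      have hz : ∀ ψ ∈ H, ψ (0 : F) = 0 := fun ψ _ => ψ.map_zero
      rw [Finset.sum_congr rfl hz, Finset.sum_const_zero, zero_mul, if_pos rfl, add_zero,
        Finset.card_singleton, Nat.cast_one, one_mul, mul_zero, AddChar.map_zero_eq_one]
    · rw [horth y hy, if_neg hy, zero_add]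
  -- the main identity
  have hmain : (∑ c : F, χ (a * c ^ n)) = ∑ ψ ∈ H.erase 1, gaussSum ψ χa := by
    have hG1 : gaussSum 1 χa = -1 := by
      have hsum0 : ∑ y : F, χa y = 0 := AddChar.sum_eq_zero_of_ne_one hχa1
      rw [gaussSum, ← Finset.add_sum_erase _ _ (Finset.mem_univ (0 : F)), MulChar.map_zero,
        zero_mul, zero_add,
        Finset.sum_congr rfl (fun y hy =>
          by rw [MulChar.one_apply (isUnit_iff_ne_zero.mpr (Finset.mem_erase.mp hy).1), one_mul])]
      have hχa0 : χa (0 : F) = 1 := by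
        rw [hχa, AddChar.mulShift_apply, mul_zero, AddChar.map_zero_eq_one]
      rw [Finset.sum_erase_eq_sub (Finset.mem_univ (0 : F)), hsum0, hχa0]
      norm_num
    calc (∑ c : F, χ (a * c ^ n))
        = ∑ y : F, ((univ.filter fun c : F => c ^ n = y).card : ℂ) * χ (a * y) := hfiber
      _ = ∑ y : F, ((if y = 0 then (1 : ℂ) else 0) + (∑ ψ ∈ H, ψ y) * χ (a * y)) :=
          Finset.sum_congr rfl fun y _ => hpoint y
      _ = 1 + ∑ y : F, (∑ ψ ∈ H, ψ y) * χ (a * y) := by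
          rw [Finset.sum_add_distrib, Finset.sum_ite_eq' univ (0 : F) (fun _ => (1 : ℂ)),
            if_pos (mem_univ _)]
      _ = 1 + ∑ ψ ∈ H, gaussSum ψ χa := by
          congr 1
          have hcell : ∀ y : F, (∑ ψ ∈ H, ψ y) * χ (a * y) = ∑ ψ ∈ H, ψ y * χa y := by
            intro y
            rw [Finset.sum_mul]
            refine Finset.sum_congr rfl fun ψ _ => ?_
            rw [hχa, AddChar.mulShift_apply]
          rw [Finset.sum_congr rfl fun y _ => hcell y, Finset.sum_comm]
          rfl
      _ = ∑ ψ ∈ H.erase 1, gaussSum ψ χa := by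
          rw [← Finset.add_sum_erase _ _ h1H, hG1]
          ring
  -- put everything together
  rw [hsplit, norm_mul, hmain]
  have habsb : ‖χ b‖ = 1 := by
    have h1 := Complex.norm_eq_one_of_mem_rootsOfUnity (χ.val_mem_rootsOfUnity b hchar)
    rwa [IsUnit.unit_spec] at h1
  rw [habsb, mul_one]
  calc ‖∑ ψ ∈ H.erase 1, gaussSum ψ χa‖
      ≤ ∑ ψ ∈ H.erase 1, ‖gaussSum ψ χa‖ := norm_sum_le _ _
    _ = ∑ ψ ∈ H.erase 1, Real.sqrt q := by
        refine Finset.sum_congr rfl fun ψ hψ => ?_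
        exact weil_abs_gaussSum (Finset.mem_erase.mp hψ).1 hχaprim
    _ = ((d - 1 : ℕ) : ℝ) * Real.sqrt q := by
        rw [Finset.sum_const, Finset.card_erase_of_mem h1H, hHcard, nsmul_eq_mul]
    _ ≤ ((d : ℝ) - 1) * Real.sqrt q := by
        rw [Nat.cast_sub hd0, Nat.cast_one]
end
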